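/- arXiv:1302.0328 — 9 statements merged into one kernel-verified Lean document; each statement's English description precedes it below -/
import Mathlib

section
/- For every integer A ≥ 2 and positive reals α₁, …, α_A with Ā = Σᵢ αᵢ, the integral over T_A of (−Σᵢ₌₁^A πᵢ(x) log πᵢ(x)) · ∏ⱼ₌₁^A πⱼ(x)^{αⱼ−1} with respect to Lebesgue measure on ℝ^{A−1} equals (∏ⱼ Γ(αⱼ) / Γ(Ā)) · ( ψ₀(Ā+1) − Σᵢ (αᵢ/Ā) ψ₀(αᵢ+1) ). Equivalently, the mean entropy of a Dirichlet(α₁,…,α_A) random vector is ψ₀(Ā+1) − Σᵢ (αᵢ/Ā) ψ₀(αᵢ+1). -/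
open MeasureTheory Real Finset

/-- The digamma function `ψ₀(x) = d/dx log Γ(x)`. -/
noncomputable def digamma (x : ℝ) : ℝ := deriv (fun y => Real.log (Real.Gamma y)) x

/-- The simplex coordinates: for `x ∈ ℝ^{A−1}`, `π i x = x i` for `i < A − 1` and
`π (A-1) x = 1 − ∑ x j`. -/
noncomputable def simplexCoord (A : ℕ) (x : Fin (A - 1) → ℝ) (i : Fin A) : ℝ :=
  if h : (i : ℕ) < A - 1 then x ⟨i, h⟩ else 1 - ∑ j, x j

/-- The open solid simplex `T_A = {x ∈ ℝ^{A−1} : xᵢ ≥ 0, ∑ xᵢ ≤ 1}`. -/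
def solidSimplex (A : ℕ) : Set (Fin (A - 1) → ℝ) :=
  {x | (∀ i, 0 ≤ x i) ∧ ∑ i, x i ≤ 1}

/-!
The entropy integrand splits as `-∑ᵢ πᵢ log πᵢ · ∏ⱼ πⱼ^{αⱼ-1}`, and `πᵢ log πᵢ · πᵢ^{αᵢ-1}` is the
derivative in `t` of `πᵢ^t` at `t = αᵢ`. So each term is the derivative in `αᵢ` of the Dirichlet
integral `∫ ∏ⱼ πⱼ^{αⱼ-1} = ∏ⱼ Γ(αⱼ) / Γ(Ā)`, computed by induction on the dimension from the
Beta integral; differentiating the Gamma quotient produces the digamma terms. Differentiation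
under the integral sign is justified by the bound `|c^t log c| ≤ (4 / t₀) c^{t₀/4}` for
`0 < c ≤ 1` and `t > t₀ / 2`.

We integrate over the open simplex, where every `πⱼ` is positive; it differs from `T_A` by part
of the boundary of a convex set, which is Lebesgue-null.
-/

open Set ProbabilityTheory
open scoped ENNReal

theorem lintegral_Ioo_rpow_mul_one_sub_rpow {a b : ℝ} (ha : 0 < a) (hb : 0 < b) :
    ∫⁻ x in Ioo 0 1, ENNReal.ofReal (x ^ (a - 1) * (1 - x) ^ (b - 1))
      = ENNReal.ofReal (beta a b) := by
  have hB := beta_pos ha hb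
  have h := lintegral_betaPDF_eq_one ha hb
  simp_rw [lintegral_betaPDF, mul_assoc, ENNReal.ofReal_mul (one_div_pos.2 hB).le] at h
  rw [lintegral_const_mul _ (by fun_prop), mul_comm] at h
  rw [ENNReal.eq_inv_of_mul_eq_one_left h, ← ENNReal.ofReal_inv_of_pos (one_div_pos.2 hB),
    one_div, inv_inv]

theorem lintegral_Ioo_rpow_mul_sub_rpow {a b c : ℝ} (ha : 0 < a) (hb : 0 < b) (hc : 0 < c) :
    ∫⁻ x in Ioo 0 c, ENNReal.ofReal (x ^ (a - 1) * (c - x) ^ (b - 1))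
      = ENNReal.ofReal (c ^ (a + b - 1) * beta a b) := by
  have hscale : ∀ y ∈ Ioo (0 : ℝ) 1, ENNReal.ofReal |c| *
      ENNReal.ofReal ((c * y) ^ (a - 1) * (c - c * y) ^ (b - 1))
        = ENNReal.ofReal (c ^ (a + b - 1)) * ENNReal.ofReal (y ^ (a - 1) * (1 - y) ^ (b - 1)) := by
    rintro y ⟨hy0, hy1⟩
    rw [← ENNReal.ofReal_mul (abs_nonneg c), ← ENNReal.ofReal_mul (by positivity),
      show c - c * y = c * (1 - y) by ring, mul_rpow hc.le hy0.le, mul_rpow hc.le (by linarith),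
      abs_of_pos hc, show a + b - 1 = 1 + (a - 1) + (b - 1) by ring, rpow_add hc, rpow_add hc,
      rpow_one]
    ring_nf
  have himage : (c * ·) '' Ioo 0 1 = Ioo 0 c := by simp [image_mul_left_Ioo hc]
  rw [← himage, lintegral_image_eq_lintegral_abs_deriv_mul measurableSet_Ioo
      (fun y _ => (hasDerivAt_const_mul c).hasDerivWithinAt) (mul_right_injective₀ hc.ne').injOn,
    setLIntegral_congr_fun measurableSet_Ioo hscale, lintegral_const_mul _ (by fun_prop),
    lintegral_Ioo_rpow_mul_one_sub_rpow ha hb, ← ENNReal.ofReal_mul (by positivity)]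

theorem lintegral_eq_lintegral_lintegral_cons {n : ℕ} {f : (Fin (n + 1) → ℝ) → ℝ≥0∞}
    (hf : Measurable f) : ∫⁻ x, f x = ∫⁻ y : Fin n → ℝ, ∫⁻ u : ℝ, f (Fin.cons u y) := by
  set e := (MeasurableEquiv.piFinSuccAbove (fun _ : Fin (n + 1) => ℝ) 0).symm
  have hfe : Measurable fun p : ℝ × (Fin n → ℝ) => f (e p) := hf.comp e.measurable
  rw [← (volume_preserving_piFinSuccAbove (fun _ => ℝ) 0).symm.lintegral_comp hf,
    Measure.volume_eq_prod, lintegral_prod_symm _ hfe.aemeasurable]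
  simp only [e, MeasurableEquiv.piFinSuccAbove_symm_apply, Fin.insertNthEquiv, Equiv.coe_fn_mk,
    Fin.insertNth_zero']

theorem ae_eq_of_convex_of_subset_closure {E : Type*} [NormedAddCommGroup E] [NormedSpace ℝ E]
    [MeasurableSpace E] [BorelSpace E] [FiniteDimensional ℝ E] (μ : Measure E)
    [μ.IsAddHaarMeasure] {s t : Set E} (ht : Convex ℝ t) (hts : t ⊆ s) (hst : s ⊆ closure t) :
    s =ᵐ[μ] t := by
  refine ae_eq_set.2 ⟨measure_mono_null ?_ (ht.addHaar_frontier μ), by simp [sdiff_eq_empty.2 hts]⟩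
  exact fun x hx => ⟨hst hx.1, fun h => hx.2 (interior_subset h)⟩

@[to_additive]
theorem prod_apply_update_eq_mul_prod_erase {ι β M : Type*} [Fintype ι] [DecidableEq ι]
    [CommMonoid M] (f : ι → β → M) (g : ι → β) (i : ι) (b : β) :
    ∏ j, f j (Function.update g i b j) = f i b * ∏ j ∈ univ.erase i, f j (g j) := by
  rw [← mul_prod_erase _ _ (mem_univ i), Function.update_self]
  exact congrArg _ (prod_congr rfl fun j hj => by rw [Function.update_of_ne (ne_of_mem_erase hj)])

theorem hasDerivAt_Gamma {x : ℝ} (hx : ∀ m : ℕ, x ≠ -m) :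
    HasDerivAt Gamma (Gamma x * digamma x) x := by
  have hd := (differentiableAt_Gamma hx).hasDerivAt
  have hdigamma : digamma x = deriv Gamma x / Gamma x := (hd.log (Gamma_ne_zero hx)).deriv
  rwa [hdigamma, mul_div_cancel₀ _ (Gamma_ne_zero hx)]

theorem hasDerivAt_Gamma_add_div_Gamma_add {a b x : ℝ} (ha : 0 < x + a) (hb : 0 < x + b) :
    HasDerivAt (fun t => Gamma (t + a) / Gamma (t + b))
      (Gamma (x + a) / Gamma (x + b) * (digamma (x + a) - digamma (x + b))) x := by
  have hpos : ∀ {y : ℝ}, 0 < y → ∀ m : ℕ, y ≠ -m := fun hy m h => by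
    linarith [h ▸ hy, (Nat.cast_nonneg m : (0 : ℝ) ≤ m)]
  have hΓa := (hasDerivAt_Gamma (hpos ha)).comp_add_const x a
  have hΓb := (hasDerivAt_Gamma (hpos hb)).comp_add_const x b
  refine (hΓa.div hΓb (Gamma_pos_of_pos hb).ne').congr_deriv ?_
  field_simp

theorem hasDerivAt_integral_rpow_mul {X : Type*} [MeasurableSpace X] {μ : Measure X}
    {c P : X → ℝ} (hc : ∀ᵐ x ∂μ, c x ∈ Set.Ioc 0 1) (hcm : AEMeasurable c μ)
    (hPm : AEStronglyMeasurable P μ) (hint : ∀ t : ℝ, 0 < t → Integrable (fun x => c x ^ t * P x) μ)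
    {t₀ : ℝ} (ht₀ : 0 < t₀) :
    Integrable (fun x => c x ^ t₀ * log (c x) * P x) μ ∧
      HasDerivAt (fun t => ∫ x, c x ^ t * P x ∂μ) (∫ x, c x ^ t₀ * log (c x) * P x ∂μ) t₀ := by
  refine hasDerivAt_integral_of_dominated_loc_of_deriv_le (F := fun t x => c x ^ t * P x)
      (F' := fun t x => c x ^ t * log (c x) * P x) (Ioo_mem_nhds (half_lt_self ht₀)
      (lt_add_of_pos_right t₀ ht₀)) ?_ (hint t₀ ht₀) ?_ ?_
      ((hint (t₀ / 4) (by positivity)).norm.const_mul (4 / t₀)) ?_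
  · filter_upwards [Ioi_mem_nhds ht₀] with t ht using (hint t ht).aestronglyMeasurable
  · exact ((hcm.pow_const t₀).mul hcm.log).aestronglyMeasurable.mul hPm
  · filter_upwards [hc] with x ⟨hc0, hc1⟩ t ht
    have hpow : c x ^ t ≤ c x ^ (t₀ / 4) * c x ^ (t₀ / 4) := by
      rw [← rpow_add hc0]
      exact rpow_le_rpow_of_exponent_ge hc0 hc1 (by linarith [ht.1])
    have hlog : |log (c x) * c x ^ (t₀ / 4)| ≤ 4 / t₀ := by
      simpa [one_div_div] using
        (abs_log_mul_self_rpow_lt (c x) (t₀ / 4) hc0 hc1 (by positivity)).le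
    have hc4 : 0 ≤ c x ^ (t₀ / 4) := (rpow_pos_of_pos hc0 _).le
    calc ‖c x ^ t * log (c x) * P x‖ = c x ^ t * |log (c x)| * ‖P x‖ := by
          rw [norm_mul, norm_mul, norm_of_nonneg (rpow_pos_of_pos hc0 _).le, norm_eq_abs]
      _ ≤ c x ^ (t₀ / 4) * c x ^ (t₀ / 4) * |log (c x)| * ‖P x‖ := by gcongr
      _ = |log (c x) * c x ^ (t₀ / 4)| * ‖c x ^ (t₀ / 4) * P x‖ := by
          rw [abs_mul, abs_of_nonneg hc4, norm_mul, norm_of_nonneg hc4]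
          ring
      _ ≤ 4 / t₀ * ‖c x ^ (t₀ / 4) * P x‖ := by gcongr
  · filter_upwards [hc] with x hcx t _
    exact (hasStrictDerivAt_const_rpow hcx.1 t).hasDerivAt.mul_const (P x)

def openSimplex (n : ℕ) : Set (Fin n → ℝ) :=
  {x | (∀ i, 0 < x i) ∧ ∑ i, x i < 1}

section Simplex

variable {n : ℕ}

theorem isOpen_openSimplex : IsOpen (openSimplex n) := by
  simp only [openSimplex, ofPred_and, ofPred_forall]
  exact (isOpen_iInter_of_finite fun i => isOpen_lt continuous_const (continuous_apply i)).inter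
    (isOpen_lt (by fun_prop) continuous_const)

theorem measurableSet_openSimplex : MeasurableSet (openSimplex n) :=
  isOpen_openSimplex.measurableSet

theorem cons_mem_openSimplex_iff {u : ℝ} {y : Fin n → ℝ} :
    (Fin.cons u y : Fin (n + 1) → ℝ) ∈ openSimplex (n + 1)
      ↔ y ∈ openSimplex n ∧ u ∈ Ioo 0 (1 - ∑ i, y i) := by
  simp only [openSimplex, mem_ofPred_eq, Fin.forall_fin_succ, Fin.sum_univ_succ, Fin.cons_zero,
    Fin.cons_succ, Set.mem_Ioo]
  constructor
  · rintro ⟨⟨hu, hy⟩, hsum⟩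
    exact ⟨⟨hy, by linarith⟩, hu, by linarith⟩
  · rintro ⟨⟨hy, -⟩, hu, hsum⟩
    exact ⟨⟨hu, hy⟩, by linarith⟩

noncomputable def dirichletWeight (a : Fin n → ℝ) (b : ℝ) (x : Fin n → ℝ) : ℝ :=
  (∏ i, x i ^ (a i - 1)) * (1 - ∑ i, x i) ^ (b - 1)

@[fun_prop]
theorem measurable_dirichletWeight (a : Fin n → ℝ) (b : ℝ) : Measurable (dirichletWeight a b) := by
  unfold dirichletWeight
  fun_prop

theorem dirichletWeight_cons (a : Fin (n + 1) → ℝ) (b u : ℝ) (y : Fin n → ℝ) :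
    dirichletWeight a b (Fin.cons u y)
      = (∏ i, y i ^ (a i.succ - 1)) * (u ^ (a 0 - 1) * (1 - ∑ i, y i - u) ^ (b - 1)) := by
  simp only [dirichletWeight, Fin.prod_univ_succ, Fin.sum_univ_succ, Fin.cons_zero, Fin.cons_succ]
  ring_nf

theorem lintegral_indicator_openSimplex_cons (a : Fin (n + 1) → ℝ) {b : ℝ} (ha : 0 < a 0)
    (hb : 0 < b) (y : Fin n → ℝ) :
    ∫⁻ u, (openSimplex (n + 1)).indicator (fun x => ENNReal.ofReal (dirichletWeight a b x))
        (Fin.cons u y)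
      = ENNReal.ofReal (beta (a 0) b) * (openSimplex n).indicator
          (fun y => ENNReal.ofReal (dirichletWeight (Fin.tail a) (a 0 + b) y)) y := by
  by_cases hy : y ∈ openSimplex n
  · have hc : 0 < 1 - ∑ i, y i := sub_pos.2 hy.2
    have hP : 0 ≤ ∏ i, y i ^ (a i.succ - 1) :=
      prod_nonneg fun i _ => (rpow_pos_of_pos (hy.1 i) _).le
    have hfiber : (fun u => (openSimplex (n + 1)).indicator
          (fun x => ENNReal.ofReal (dirichletWeight a b x)) (Fin.cons u y))
        = (Ioo 0 (1 - ∑ i, y i)).indicator fun u => ENNReal.ofReal (∏ i, y i ^ (a i.succ - 1)) *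
            ENNReal.ofReal (u ^ (a 0 - 1) * (1 - ∑ i, y i - u) ^ (b - 1)) := by
      ext u
      by_cases hu : u ∈ Ioo 0 (1 - ∑ i, y i)
      · rw [indicator_of_mem (cons_mem_openSimplex_iff.2 ⟨hy, hu⟩), indicator_of_mem hu,
          dirichletWeight_cons, ENNReal.ofReal_mul hP]
      · rw [indicator_of_notMem (fun h => hu (cons_mem_openSimplex_iff.1 h).2),
          indicator_of_notMem hu]
    rw [hfiber, lintegral_indicator measurableSet_Ioo, lintegral_const_mul _ (by fun_prop),
      lintegral_Ioo_rpow_mul_sub_rpow ha hb hc, indicator_of_mem hy, dirichletWeight,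
      ← ENNReal.ofReal_mul hP, ← ENNReal.ofReal_mul (beta_pos ha hb).le]
    simp only [Fin.tail]
    ring_nf
  · have hzero : ∀ u, (openSimplex (n + 1)).indicator
        (fun x => ENNReal.ofReal (dirichletWeight a b x)) (Fin.cons u y) = 0 := fun u =>
      indicator_of_notMem (fun h => hy (cons_mem_openSimplex_iff.1 h).1) _
    simp [hzero, hy]

theorem lintegral_openSimplex_dirichletWeight (a : Fin n → ℝ) {b : ℝ} (ha : ∀ i, 0 < a i)
    (hb : 0 < b) :
    ∫⁻ x in openSimplex n, ENNReal.ofReal (dirichletWeight a b x)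
      = ENNReal.ofReal ((∏ i, Gamma (a i)) * Gamma b / Gamma (∑ i, a i + b)) := by
  induction n generalizing b with
  | zero => simp [openSimplex, dirichletWeight, volume_pi, div_self (Gamma_pos_of_pos hb).ne']
  | succ n ih =>
    rw [← lintegral_indicator measurableSet_openSimplex, lintegral_eq_lintegral_lintegral_cons
        ((by fun_prop : Measurable _).indicator measurableSet_openSimplex)]
    simp_rw [lintegral_indicator_openSimplex_cons a (ha 0) hb]
    rw [lintegral_const_mul _ ((by fun_prop : Measurable _).indicator measurableSet_openSimplex),
      lintegral_indicator measurableSet_openSimplex,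
      ih (Fin.tail a) (fun i => ha i.succ) (add_pos (ha 0) hb),
      ← ENNReal.ofReal_mul (beta_pos (ha 0) hb).le, Fin.prod_univ_succ, Fin.sum_univ_succ, beta]
    have := (Gamma_pos_of_pos (add_pos (ha 0) hb)).ne'
    congr 1
    field_simp
    simp only [Fin.tail]
    ring_nf

theorem openSimplex_subset_solidSimplex : openSimplex n ⊆ solidSimplex (n + 1) :=
  fun _ hx => ⟨fun i => (hx.1 i).le, hx.2.le⟩

theorem openSegment_subset_openSimplex {x y : Fin n → ℝ} (hx : x ∈ solidSimplex (n + 1))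
    (hy : y ∈ openSimplex n) : openSegment ℝ x y ⊆ openSimplex n := by
  rintro _ ⟨a, b, ha, hb, hab, rfl⟩
  refine ⟨fun i => ?_, ?_⟩
  · have := hx.1 i
    have := hy.1 i
    simp only [Pi.add_apply, Pi.smul_apply, smul_eq_mul]
    positivity
  · have hxs : ∑ i, x i ≤ 1 := hx.2
    simp only [Pi.add_apply, Pi.smul_apply, smul_eq_mul, sum_add_distrib, ← mul_sum]
    nlinarith [mul_nonneg ha.le (sub_nonneg.2 hxs), mul_pos hb (sub_pos.2 hy.2)]

theorem convex_openSimplex : Convex ℝ (openSimplex n) :=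
  convex_iff_openSegment_subset.2 fun _ hx _ hy =>
    openSegment_subset_openSimplex (openSimplex_subset_solidSimplex hx) hy

theorem solidSimplex_subset_closure_openSimplex :
    solidSimplex (n + 1) ⊆ closure (openSimplex n) := by
  intro x hx
  have hc : (fun _ => 1 / (n + 1 : ℝ)) ∈ openSimplex n := by
    refine ⟨fun _ => by positivity, ?_⟩
    rw [sum_const, card_univ, Fintype.card_fin, nsmul_eq_mul]
    field_simp
    linarith
  exact closure_mono (openSegment_subset_openSimplex hx hc)
    (segment_subset_closure_openSegment (left_mem_segment ℝ x _))

theorem solidSimplex_ae_eq_openSimplex :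
    (solidSimplex (n + 1) : Set (Fin n → ℝ)) =ᵐ[volume] openSimplex n :=
  ae_eq_of_convex_of_subset_closure volume convex_openSimplex openSimplex_subset_solidSimplex
    solidSimplex_subset_closure_openSimplex

theorem simplexCoord_castSucc (x : Fin n → ℝ) (i : Fin n) :
    simplexCoord (n + 1) x i.castSucc = x i := by
  simp [simplexCoord]

theorem simplexCoord_last (x : Fin n → ℝ) : simplexCoord (n + 1) x (Fin.last n) = 1 - ∑ i, x i := by
  simp [simplexCoord]

theorem sum_simplexCoord (x : Fin n → ℝ) : ∑ j, simplexCoord (n + 1) x j = 1 := by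
  simp [Fin.sum_univ_castSucc, simplexCoord_castSucc, simplexCoord_last]

theorem prod_simplexCoord_rpow_eq_dirichletWeight (x : Fin n → ℝ) (α : Fin (n + 1) → ℝ) :
    ∏ j, simplexCoord (n + 1) x j ^ (α j - 1)
      = dirichletWeight (fun i => α i.castSucc) (α (Fin.last n)) x := by
  simp [dirichletWeight, Fin.prod_univ_castSucc, simplexCoord_castSucc, simplexCoord_last]

theorem simplexCoord_pos {x : Fin n → ℝ} (hx : x ∈ openSimplex n) (j : Fin (n + 1)) :
    0 < simplexCoord (n + 1) x j := by
  induction j using Fin.lastCases with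
  | last => simpa [simplexCoord_last] using hx.2
  | cast i => simpa [simplexCoord_castSucc] using hx.1 i

theorem simplexCoord_le_one {x : Fin n → ℝ} (hx : x ∈ openSimplex n) (j : Fin (n + 1)) :
    simplexCoord (n + 1) x j ≤ 1 :=
  sum_simplexCoord x ▸ single_le_sum (fun k _ => (simplexCoord_pos hx k).le) (mem_univ j)

@[fun_prop]
theorem measurable_simplexCoord (j : Fin (n + 1)) :
    Measurable fun x : Fin n → ℝ => simplexCoord (n + 1) x j := by
  induction j using Fin.lastCases with
  | last => simp only [simplexCoord_last]; fun_prop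
  | cast i => simp only [simplexCoord_castSucc]; fun_prop

theorem lintegral_openSimplex_prod_simplexCoord_rpow (α : Fin (n + 1) → ℝ) (hα : ∀ j, 0 < α j) :
    ∫⁻ x in openSimplex n, ENNReal.ofReal (∏ j, simplexCoord (n + 1) x j ^ (α j - 1))
      = ENNReal.ofReal ((∏ j, Gamma (α j)) / Gamma (∑ j, α j)) := by
  simp_rw [prod_simplexCoord_rpow_eq_dirichletWeight,
    lintegral_openSimplex_dirichletWeight _ (fun i => hα _) (hα _), Fin.prod_univ_castSucc,
    Fin.sum_univ_castSucc]

theorem measurable_prod_simplexCoord_rpow (s : Finset (Fin (n + 1))) (g : Fin (n + 1) → ℝ) :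
    Measurable fun x : Fin n → ℝ => ∏ j ∈ s, simplexCoord (n + 1) x j ^ g j :=
  Finset.measurable_prod s fun j _ => by fun_prop

theorem prod_simplexCoord_rpow_nonneg_ae (g : Fin (n + 1) → ℝ) :
    0 ≤ᵐ[volume.restrict (openSimplex n)]
      fun x : Fin n → ℝ => ∏ j, simplexCoord (n + 1) x j ^ g j :=
  ae_restrict_of_forall_mem measurableSet_openSimplex fun _ hx =>
    prod_nonneg fun j _ => (rpow_pos_of_pos (simplexCoord_pos hx j) _).le

theorem integrableOn_openSimplex_prod_simplexCoord_rpow (α : Fin (n + 1) → ℝ)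
    (hα : ∀ j, 0 < α j) :
    IntegrableOn (fun x : Fin n → ℝ => ∏ j, simplexCoord (n + 1) x j ^ (α j - 1))
      (openSimplex n) := by
  refine ⟨(measurable_prod_simplexCoord_rpow _ _).aestronglyMeasurable, ?_⟩
  rw [hasFiniteIntegral_iff_ofReal (prod_simplexCoord_rpow_nonneg_ae _),
    lintegral_openSimplex_prod_simplexCoord_rpow α hα]
  exact ENNReal.ofReal_lt_top

theorem integral_openSimplex_prod_simplexCoord_rpow (α : Fin (n + 1) → ℝ) (hα : ∀ j, 0 < α j) :
    ∫ x in openSimplex n, ∏ j, simplexCoord (n + 1) x j ^ (α j - 1)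
      = (∏ j, Gamma (α j)) / Gamma (∑ j, α j) := by
  rw [integral_eq_lintegral_of_nonneg_ae (prod_simplexCoord_rpow_nonneg_ae _)
      (measurable_prod_simplexCoord_rpow _ _).aestronglyMeasurable,
    lintegral_openSimplex_prod_simplexCoord_rpow α hα, ENNReal.toReal_ofReal]
  exact div_nonneg (prod_nonneg fun j _ => (Gamma_pos_of_pos (hα j)).le)
    (Gamma_pos_of_pos (sum_pos (fun j _ => hα j) univ_nonempty)).le

theorem prod_simplexCoord_rpow_update (x : Fin n → ℝ) (α : Fin (n + 1) → ℝ)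
    (i : Fin (n + 1)) (t : ℝ) :
    ∏ j, simplexCoord (n + 1) x j ^ (Function.update α i (t + 1) j - 1)
      = simplexCoord (n + 1) x i ^ t *
          ∏ j ∈ univ.erase i, simplexCoord (n + 1) x j ^ (α j - 1) := by
  rw [prod_apply_update_eq_mul_prod_erase (fun j a => simplexCoord (n + 1) x j ^ (a - 1)),
    add_sub_cancel_right]

theorem integral_openSimplex_simplexCoord_rpow_mul (α : Fin (n + 1) → ℝ)
    (hα : ∀ j, 0 < α j) (i : Fin (n + 1)) {t : ℝ} (ht : 0 < t) :
    IntegrableOn (fun x : Fin n → ℝ => simplexCoord (n + 1) x i ^ t *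
        ∏ j ∈ univ.erase i, simplexCoord (n + 1) x j ^ (α j - 1)) (openSimplex n) ∧
      ∫ x in openSimplex n, simplexCoord (n + 1) x i ^ t *
          ∏ j ∈ univ.erase i, simplexCoord (n + 1) x j ^ (α j - 1)
        = (∏ j ∈ univ.erase i, Gamma (α j)) *
            (Gamma (t + 1) / Gamma (t + (1 + ∑ j ∈ univ.erase i, α j))) := by
  have hαt : ∀ j, 0 < Function.update α i (t + 1) j := fun j => by
    rcases eq_or_ne j i with rfl | hj
    · simp only [Function.update_self]; linarith
    · simp only [Function.update_of_ne hj, hα j]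
  refine ⟨by simpa only [prod_simplexCoord_rpow_update] using
    integrableOn_openSimplex_prod_simplexCoord_rpow _ hαt, ?_⟩
  have h := integral_openSimplex_prod_simplexCoord_rpow _ hαt
  simp only [prod_simplexCoord_rpow_update,
    prod_apply_update_eq_mul_prod_erase (fun _ a => Gamma a),
    sum_apply_update_eq_add_sum_erase (fun _ a => a)] at h
  rw [h, ← add_assoc]
  ring

theorem integral_openSimplex_simplexCoord_mul_log (α : Fin (n + 1) → ℝ)
    (hα : ∀ j, 0 < α j) (i : Fin (n + 1)) :
    IntegrableOn (fun x : Fin n → ℝ => simplexCoord (n + 1) x i * log (simplexCoord (n + 1) x i) *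
        ∏ j, simplexCoord (n + 1) x j ^ (α j - 1)) (openSimplex n) ∧
      ∫ x in openSimplex n, simplexCoord (n + 1) x i * log (simplexCoord (n + 1) x i) *
          ∏ j, simplexCoord (n + 1) x j ^ (α j - 1)
        = α i / (∑ j, α j) * ((∏ j, Gamma (α j)) / Gamma (∑ j, α j)) *
            (digamma (α i + 1) - digamma (∑ j, α j + 1)) := by
  set c : (Fin n → ℝ) → ℝ := fun x => simplexCoord (n + 1) x i
  set P : (Fin n → ℝ) → ℝ := fun x => ∏ j ∈ univ.erase i, simplexCoord (n + 1) x j ^ (α j - 1)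
  set C := ∏ j ∈ univ.erase i, Gamma (α j)
  set T := ∑ j ∈ univ.erase i, α j
  have hS : MeasurableSet (openSimplex n) := measurableSet_openSimplex
  have hT : 0 ≤ T := sum_nonneg fun j _ => (hα j).le
  have hc : ∀ᵐ x ∂volume.restrict (openSimplex n), c x ∈ Set.Ioc 0 1 :=
    ae_restrict_of_forall_mem hS fun x hx => ⟨simplexCoord_pos hx i, simplexCoord_le_one hx i⟩
  obtain ⟨hInt, hD⟩ := hasDerivAt_integral_rpow_mul hc (measurable_simplexCoord i).aemeasurable
    (measurable_prod_simplexCoord_rpow _ _).aestronglyMeasurable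
    (fun t ht => (integral_openSimplex_simplexCoord_rpow_mul α hα i ht).1) (hα i)
  have hD' : HasDerivAt (fun t => ∫ x in openSimplex n, c x ^ t * P x)
      (C * (Gamma (α i + 1) / Gamma (α i + (1 + T)) *
        (digamma (α i + 1) - digamma (α i + (1 + T))))) (α i) :=
    ((hasDerivAt_Gamma_add_div_Gamma_add (by linarith [hα i]) (by linarith [hα i])).const_mul
      C).congr_of_eventuallyEq (Filter.eventually_of_mem (Ioi_mem_nhds (hα i))
        fun t ht => (integral_openSimplex_simplexCoord_rpow_mul α hα i ht).2)
  have hentropy : EqOn (fun x => c x * log (c x) * ∏ j, simplexCoord (n + 1) x j ^ (α j - 1))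
      (fun x => c x ^ α i * log (c x) * P x) (openSimplex n) := fun x hx => by
    have hcx := (simplexCoord_pos hx i).ne'
    simp only [c, P]
    rw [← mul_prod_erase _ _ (mem_univ i), rpow_sub_one hcx]
    field_simp
  have hsum : α i + (1 + T) = ∑ j, α j + 1 := by
    rw [← add_sum_erase _ _ (mem_univ i)]
    ring
  have hprod : Gamma (α i + 1) * C = α i * ∏ j, Gamma (α j) := by
    rw [Gamma_add_one (hα i).ne', ← mul_prod_erase _ _ (mem_univ i)]
    ring
  have hA := sum_pos (fun j _ => hα j) (univ_nonempty (α := Fin (n + 1)))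
  refine ⟨IntegrableOn.congr_fun hInt hentropy.symm hS, ?_⟩
  rw [setIntegral_congr_fun hS hentropy, hD.unique hD', hsum, Gamma_add_one hA.ne']
  field_simp
  rw [mul_comm C, hprod]
  ring

end Simplex

/-- Mean entropy of a Dirichlet random vector: for `A ≥ 2` and `α i > 0` with `Ā = ∑ αᵢ`,
`∫_{T_A} (−∑ᵢ πᵢ log πᵢ) ∏ⱼ πⱼ^{αⱼ−1} dx
  = (∏ⱼ Γ(αⱼ)/Γ(Ā)) (ψ₀(Ā+1) − ∑ᵢ (αᵢ/Ā) ψ₀(αᵢ+1))`. -/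
theorem dirichlet_mean_entropy (A : ℕ) (hA : 2 ≤ A) (α : Fin A → ℝ)
    (hα : ∀ i, 0 < α i) :
    ∫ x in solidSimplex A,
        (-(∑ i, simplexCoord A x i * Real.log (simplexCoord A x i))) *
          ∏ j, simplexCoord A x j ^ (α j - 1)
      = ((∏ j, Real.Gamma (α j)) / Real.Gamma (∑ i, α i)) *
          (digamma ((∑ i, α i) + 1)
            - ∑ i, (α i / (∑ i, α i)) * digamma (α i + 1)) := by
  obtain ⟨n, rfl⟩ : ∃ n, A = n + 1 := ⟨A - 1, by omega⟩
  have hweights : ∑ i, α i / ∑ j, α j = 1 := by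
    rw [← sum_div, div_self (sum_pos (fun j _ => hα j) univ_nonempty).ne']
  refine (setIntegral_congr_set solidSimplex_ae_eq_openSimplex).trans ?_
  -- the domain `Fin (n + 1 - 1) → ℝ` is `Fin n → ℝ` only up to defeq
  change ∫ x : Fin n → ℝ in _, _ = _
  simp_rw [neg_mul, sum_mul]
  rw [integral_neg, integral_finsetSum _ fun i _ =>
      (integral_openSimplex_simplexCoord_mul_log α hα i).1]
  simp_rw [(integral_openSimplex_simplexCoord_mul_log α hα _).2]
  set K := (∏ j, Gamma (α j)) / Gamma (∑ j, α j)
  have hsplit : ∑ i, α i / (∑ j, α j) * K * (digamma (α i + 1) - digamma (∑ j, α j + 1))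
      = K * ∑ i, α i / (∑ j, α j) * digamma (α i + 1)
        - K * digamma (∑ j, α j + 1) * ∑ i, α i / ∑ j, α j := by
    rw [mul_sum, mul_sum, ← sum_sub_distrib]
    exact sum_congr rfl fun i _ => by ring
  rw [hsplit, hweights]
  ring
end

section
/- For all reals a > 0 and b > 0: ∫₀¹ x^{a−1} (1−x)^{b−1} log x dx = B(a,b) · (ψ₀(a) − ψ₀(a+b)). -/
/-!
Differentiate the Beta integral `B(t, b) = ∫₀¹ x^{t-1} (1-x)^{b-1} dx` in `t` under the integral
sign: the `t`-derivative of the integrand is the integrand times `log x`, and since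
`|log x| ≤ x^{-ε} / ε` it is dominated near `t = a` by a Beta integrand with first parameter
`a/4 > 0`. On the other hand `B(t, b) = Γ(t) Γ(b) / Γ(t + b)` has logarithmic derivative
`ψ₀(t) - ψ₀(t + b)`.
-/

open MeasureTheory Real

/-- The Beta function `B(a,b) = Γ(a)Γ(b)/Γ(a+b)`. -/
noncomputable def betaFn (a b : ℝ) : ℝ := Real.Gamma a * Real.Gamma b / Real.Gamma (a + b)

open Set Filter Topology

lemma ofReal_cpow_mul_one_sub_cpow {p q x : ℝ} (hx₀ : 0 ≤ x) (hx₁ : x ≤ 1) :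
    (x : ℂ) ^ ((p : ℂ) - 1) * (1 - (x : ℂ)) ^ ((q : ℂ) - 1)
      = ((x ^ (p - 1) * (1 - x) ^ (q - 1) : ℝ) : ℂ) := by
  rw [Complex.ofReal_mul, Complex.ofReal_cpow hx₀, Complex.ofReal_cpow (sub_nonneg.2 hx₁)]
  push_cast
  ring

lemma integrableOn_rpow_mul_one_sub_rpow {p q : ℝ} (hp : 0 < p) (hq : 0 < q) :
    IntegrableOn (fun x : ℝ => x ^ (p - 1) * (1 - x) ^ (q - 1)) (Ioo 0 1) := by
  have hc := Complex.betaIntegral_convergent (u := p) (v := q) (by simpa) (by simpa)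
  rw [intervalIntegrable_iff_integrableOn_Ioc_of_le zero_le_one] at hc
  refine (IntegrableOn.congr_fun hc.re (fun x hx => ?_) measurableSet_Ioc).mono_set
    Ioo_subset_Ioc_self
  simp [ofReal_cpow_mul_one_sub_cpow (p := p) (q := q) hx.1.le hx.2]

lemma integral_rpow_mul_one_sub_rpow_eq_betaFn {p q : ℝ} (hp : 0 < p) (hq : 0 < q) :
    ∫ x in Ioo (0 : ℝ) 1, x ^ (p - 1) * (1 - x) ^ (q - 1) = betaFn p q := by
  have hbeta : Complex.betaIntegral p q
      = ((∫ x in Ioo (0 : ℝ) 1, x ^ (p - 1) * (1 - x) ^ (q - 1) : ℝ) : ℂ) := by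
    rw [← integral_Ioc_eq_integral_Ioo, ← intervalIntegral.integral_of_le zero_le_one,
      ← intervalIntegral.integral_ofReal, Complex.betaIntegral]
    refine intervalIntegral.integral_congr fun x hx => ?_
    rw [uIcc_of_le zero_le_one] at hx
    exact ofReal_cpow_mul_one_sub_cpow hx.1 hx.2
  have h := Complex.Gamma_mul_Gamma_eq_betaIntegral (s := p) (t := q) (by simpa) (by simpa)
  rw [hbeta, ← Complex.ofReal_add, Complex.Gamma_ofReal, Complex.Gamma_ofReal,
    Complex.Gamma_ofReal, ← Complex.ofReal_mul, ← Complex.ofReal_mul] at h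
  rw [betaFn, eq_div_iff (Gamma_pos_of_pos (add_pos hp hq)).ne', mul_comm]
  exact (Complex.ofReal_injective h).symm

lemma abs_log_le_rpow_neg_div {x ε : ℝ} (hx₀ : 0 < x) (hx₁ : x ≤ 1) (hε : 0 < ε) :
    |log x| ≤ x ^ (-ε) / ε := by
  have h := (abs_log_mul_self_rpow_lt x ε hx₀ hx₁ hε).le
  rw [abs_mul, abs_of_pos (rpow_pos_of_pos hx₀ ε), ← le_div_iff₀ (rpow_pos_of_pos hx₀ ε)] at h
  calc |log x| ≤ 1 / ε / x ^ ε := h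
    _ = x ^ (-ε) / ε := by rw [rpow_neg hx₀.le]; ring

lemma abs_rpow_mul_one_sub_rpow_mul_log_le {x s t q ε : ℝ} (hx : x ∈ Ioo (0 : ℝ) 1)
    (hst : s ≤ t) (hε : 0 < ε) :
    |x ^ (t - 1) * (1 - x) ^ (q - 1) * log x|
      ≤ ε⁻¹ * (x ^ (s - ε - 1) * (1 - x) ^ (q - 1)) := by
  obtain ⟨hx₀, hx₁⟩ := hx
  have hpow : x ^ (t - 1) ≤ x ^ (s - 1) :=
    rpow_le_rpow_of_exponent_ge hx₀ hx₁.le (by linarith)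
  have h1x : 0 ≤ (1 - x) ^ (q - 1) := rpow_nonneg (by linarith) _
  rw [abs_mul, abs_mul, abs_of_nonneg (rpow_nonneg hx₀.le _), abs_of_nonneg h1x]
  calc x ^ (t - 1) * (1 - x) ^ (q - 1) * |log x|
      ≤ x ^ (s - 1) * (1 - x) ^ (q - 1) * (x ^ (-ε) / ε) := by
        gcongr
        exact abs_log_le_rpow_neg_div hx₀ hx₁.le hε
    _ = ε⁻¹ * (x ^ (s - ε - 1) * (1 - x) ^ (q - 1)) := by
        rw [show s - ε - 1 = (s - 1) + -ε by ring, rpow_add hx₀]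
        ring

lemma hasDerivAt_rpow_mul_one_sub_rpow {x q : ℝ} (hx : 0 < x) (t : ℝ) :
    HasDerivAt (fun t => x ^ (t - 1) * (1 - x) ^ (q - 1))
      (x ^ (t - 1) * (1 - x) ^ (q - 1) * log x) t := by
  have h : HasDerivAt (fun t => x ^ (t - 1)) (x ^ (t - 1) * log x) t := by
    simpa [mul_comm] using ((hasDerivAt_id t).sub_const 1).const_rpow hx
  exact (h.mul_const _).congr_deriv (by ring)

lemma hasDerivAt_integral_rpow_mul_one_sub_rpow {p q : ℝ} (hp : 0 < p) (hq : 0 < q) :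
    HasDerivAt (fun t => ∫ x in Ioo (0 : ℝ) 1, x ^ (t - 1) * (1 - x) ^ (q - 1))
      (∫ x in Ioo (0 : ℝ) 1, x ^ (p - 1) * (1 - x) ^ (q - 1) * log x) p := by
  refine (hasDerivAt_integral_of_dominated_loc_of_deriv_le (x₀ := p)
    (F := fun t x => x ^ (t - 1) * (1 - x) ^ (q - 1))
    (F' := fun t x => x ^ (t - 1) * (1 - x) ^ (q - 1) * log x)
    (bound := fun x => (p / 4)⁻¹ * (x ^ (p / 2 - p / 4 - 1) * (1 - x) ^ (q - 1)))
    (Ioi_mem_nhds (half_lt_self hp)) (Eventually.of_forall fun t => by fun_prop)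
    (integrableOn_rpow_mul_one_sub_rpow hp hq) (by fun_prop) ?_ ?_ ?_).2
  · refine (ae_restrict_iff' measurableSet_Ioo).2 (ae_of_all _ fun x hx t ht => ?_)
    exact abs_rpow_mul_one_sub_rpow_mul_log_le hx ht.le (by positivity)
  · refine (integrableOn_rpow_mul_one_sub_rpow ?_ hq).const_mul _
    linarith
  · exact (ae_restrict_iff' measurableSet_Ioo).2
      (ae_of_all _ fun x hx t _ => hasDerivAt_rpow_mul_one_sub_rpow hx.1 t)

lemma digamma_eq_deriv_Gamma_div_Gamma {a : ℝ} (ha : ∀ m : ℕ, a ≠ -m) :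
    digamma a = deriv Gamma a / Gamma a :=
  deriv.log (differentiableAt_Gamma ha) (Gamma_ne_zero ha)

lemma hasDerivAt_betaFn_left {a b : ℝ} (ha : ∀ m : ℕ, a ≠ -m) (hab : ∀ m : ℕ, a + b ≠ -m) :
    HasDerivAt (fun t => betaFn t b) (betaFn a b * (digamma a - digamma (a + b))) a := by
  have hΓa := (differentiableAt_Gamma ha).hasDerivAt
  have hΓab := ((differentiableAt_Gamma hab).hasDerivAt).comp_add_const a b
  refine ((hΓa.mul_const (Gamma b)).div hΓab (Gamma_ne_zero hab)).congr_deriv ?_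
  rw [betaFn, digamma_eq_deriv_Gamma_div_Gamma ha, digamma_eq_deriv_Gamma_div_Gamma hab]
  field_simp [Gamma_ne_zero ha, Gamma_ne_zero hab]

/-- For `a, b > 0`, `∫₀¹ x^{a−1} (1−x)^{b−1} log x dx = B(a,b) (ψ₀(a) − ψ₀(a+b))`. -/
theorem beta_log_integral (a b : ℝ) (ha : 0 < a) (hb : 0 < b) :
    ∫ x in Set.Ioo (0 : ℝ) 1, x ^ (a - 1) * (1 - x) ^ (b - 1) * Real.log x
      = betaFn a b * (digamma a - digamma (a + b)) := by
  have not_pole {s : ℝ} (hs : 0 < s) : ∀ m : ℕ, s ≠ -m := fun m h => by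
    linarith [(Nat.cast_nonneg m : (0 : ℝ) ≤ m)]
  have hbeta : (fun t => ∫ x in Ioo (0 : ℝ) 1, x ^ (t - 1) * (1 - x) ^ (b - 1))
      =ᶠ[𝓝 a] fun t => betaFn t b := by
    filter_upwards [eventually_gt_nhds ha] with t ht
    exact integral_rpow_mul_one_sub_rpow_eq_betaFn ht hb
  exact ((hasDerivAt_integral_rpow_mul_one_sub_rpow ha hb).congr_of_eventuallyEq
    hbeta.symm).unique (hasDerivAt_betaFn_left (not_pole ha) (not_pole (add_pos ha hb)))
end

section
/- Let π be a random probability sequence, T a size-biased index for π, and T₂ a second size-biased index. Then for every measurable function g : (0,1]×(0,1] → [0,∞], extended by g(x,y) = 0 when x = 0 or y = 0, one has E[ Σᵢ Σ_{j ≠ i} g(πᵢ, πⱼ) ] = E[ g(π_T, π_{T₂}) · (1 − π_T) / (π_T π_{T₂}) ], with both sides interpreted in [0,∞]. -/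
open MeasureTheory ENNReal

/-!
Given `w`, the pair `(T, T₂)` takes the value `(i, j)`, `i ≠ j`, with probability
`wᵢ wⱼ / (1 - wᵢ)`, and this is exactly cancelled by the weight `(1 - w_T) / (w_T w_{T₂})`.
Splitting the right-hand side along the fibres of `(T, T₂)`, the diagonal fibres being null,
therefore yields the double sum term by term. Where `wᵢ` or `wⱼ` vanishes, both sides vanish
because `g` does.
-/

theorem lintegral_eq_tsum_setLIntegral_fiber {Ω α : Type*} [MeasurableSpace Ω] [Countable α]
    [MeasurableSpace α] [MeasurableSingletonClass α] {ν : Measure Ω} {S : Ω → α}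
    (hS : Measurable S) (F : Ω → ℝ≥0∞) :
    ∫⁻ ω, F ω ∂ν = ∑' a, ∫⁻ ω in S ⁻¹' {a}, F ω ∂ν := by
  rw [← lintegral_iUnion (fun a => hS (measurableSet_singleton a)) (pairwise_disjoint_fiber S),
    ← Set.preimage_iUnion, Set.iUnion_of_singleton, Set.preimage_univ, setLIntegral_univ]

theorem ENNReal.mul_div_mul_mul_div_mul_cancel {a b c : ℝ≥0∞} (x : ℝ≥0∞) (ha₀ : a ≠ 0)
    (ha : a ≠ ∞) (hb₀ : b ≠ 0) (hb : b ≠ ∞) (hc₀ : c ≠ 0) (hc : c ≠ ∞) :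
    a * (b / c * (x * c / (a * b))) = x := by
  rw [div_eq_mul_inv, div_eq_mul_inv, ENNReal.mul_inv (.inl ha₀) (.inl ha)]
  calc a * (b * c⁻¹ * (x * c * (a⁻¹ * b⁻¹)))
      = x * (a * a⁻¹ * (b * b⁻¹) * (c⁻¹ * c)) := by ring
    _ = x := by
      rw [ENNReal.mul_inv_cancel ha₀ ha, ENNReal.mul_inv_cancel hb₀ hb,
        ENNReal.inv_mul_cancel hc₀ hc, one_mul, one_mul, mul_one]

theorem add_le_one_of_tsum_eq_one {ι : Type*} {v : ι → ℝ} (hv : ∀ k, 0 ≤ v k)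
    (hs : ∑' k, v k = 1) {i j : ι} (hij : i ≠ j) : v i + v j ≤ 1 := by
  classical
  have hsummable : Summable v := by
    by_contra h
    simp [tsum_eq_zero_of_not_summable h] at hs
  simpa [Finset.sum_pair hij, hs] using hsummable.sum_le_tsum {i, j} fun k _ => hv k

noncomputable def sizeBiasCorrection (g : ℝ → ℝ → ℝ≥0∞) (x y : ℝ) : ℝ≥0∞ :=
  g x y * ENNReal.ofReal (1 - x) / (ENNReal.ofReal x * ENNReal.ofReal y)

theorem measurable_sizeBiasCorrection {g : ℝ → ℝ → ℝ≥0∞}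
    (hg : Measurable (Function.uncurry g)) :
    Measurable (Function.uncurry (sizeBiasCorrection g)) :=
  (hg.mul (ENNReal.measurable_ofReal.comp (measurable_const.sub measurable_fst))).div
    ((ENNReal.measurable_ofReal.comp measurable_fst).mul
      (ENNReal.measurable_ofReal.comp measurable_snd))

theorem ofReal_mul_ofReal_div_mul_sizeBiasCorrection {g : ℝ → ℝ → ℝ≥0∞}
    (hg0 : ∀ x y : ℝ, x = 0 ∨ y = 0 → g x y = 0) {x y : ℝ} (hx : 0 ≤ x) (hy : 0 ≤ y)
    (hxy : x + y ≤ 1) :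
    ENNReal.ofReal x * (ENNReal.ofReal (y / (1 - x)) * sizeBiasCorrection g x y) = g x y := by
  rcases hx.eq_or_lt with rfl | hx
  · simp [hg0 0 y (.inl rfl)]
  rcases hy.eq_or_lt with rfl | hy
  · simp [hg0 x 0 (.inr rfl)]
  have hx' : 0 < 1 - x := by linarith
  rw [sizeBiasCorrection, ENNReal.ofReal_div_of_pos hx']
  exact ENNReal.mul_div_mul_mul_div_mul_cancel _ (ENNReal.ofReal_pos.2 hx).ne' ofReal_ne_top
    (ENNReal.ofReal_pos.2 hy).ne' ofReal_ne_top (ENNReal.ofReal_pos.2 hx').ne' ofReal_ne_top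

section SizeBiased

variable {Ω : Type*} [MeasurableSpace Ω]

/- The conditional laws given `w` are encoded by integrating against every measurable
test function of `w`. -/

def IsSizeBiasedIndex (μ : Measure Ω) (w : Ω → ℕ → ℝ) (T : Ω → ℕ) : Prop :=
  ∀ i : ℕ, ∀ f : (ℕ → ℝ) → ℝ≥0∞, Measurable f →
    ∫⁻ ω in {ω | T ω = i}, f (w ω) ∂μ = ∫⁻ ω, ENNReal.ofReal (w ω i) * f (w ω) ∂μ

def IsSecondSizeBiasedIndex (μ : Measure Ω) (w : Ω → ℕ → ℝ) (T T₂ : Ω → ℕ) : Prop :=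
  ∀ i j : ℕ, j ≠ i → ∀ f : (ℕ → ℝ) → ℝ≥0∞, Measurable f →
    ∫⁻ ω in {ω | T ω = i ∧ T₂ ω = j}, f (w ω) ∂μ
      = ∫⁻ ω in {ω | T ω = i}, ENNReal.ofReal (w ω j / (1 - w ω i)) * f (w ω) ∂μ

variable {μ : Measure Ω} {w : Ω → ℕ → ℝ} {T T₂ : Ω → ℕ}

theorem IsSecondSizeBiasedIndex.setLIntegral_eq (hsb : IsSizeBiasedIndex μ w T)
    (hsb2 : IsSecondSizeBiasedIndex μ w T T₂) {i j : ℕ} (hji : j ≠ i)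
    {f : (ℕ → ℝ) → ℝ≥0∞} (hf : Measurable f) :
    ∫⁻ ω in {ω | T ω = i ∧ T₂ ω = j}, f (w ω) ∂μ
      = ∫⁻ ω, ENNReal.ofReal (w ω i) * (ENNReal.ofReal (w ω j / (1 - w ω i)) * f (w ω)) ∂μ := by
  rw [hsb2 i j hji f hf, hsb i (fun v => ENNReal.ofReal (v j / (1 - v i)) * f v) (by fun_prop)]

theorem setLIntegral_diagonal_eq_zero (hne : ∀ᵐ ω ∂μ, T₂ ω ≠ T ω) (i : ℕ) (F : Ω → ℝ≥0∞) :
    ∫⁻ ω in {ω | T ω = i ∧ T₂ ω = i}, F ω ∂μ = 0 :=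
  setLIntegral_measure_zero _ _ <| measure_mono_null
    (fun _ hω => not_not.2 (hω.2.trans hω.1.symm)) (ae_iff.1 hne)

theorem IsSecondSizeBiasedIndex.setLIntegral_sizeBiasCorrection
    (hT : Measurable T) (hT₂ : Measurable T₂)
    (hnn : ∀ᵐ ω ∂μ, ∀ i, 0 ≤ w ω i) (hsum : ∀ᵐ ω ∂μ, ∑' i, w ω i = 1)
    (hsb : IsSizeBiasedIndex μ w T) (hsb2 : IsSecondSizeBiasedIndex μ w T T₂)
    {g : ℝ → ℝ → ℝ≥0∞} (hg : Measurable (Function.uncurry g))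
    (hg0 : ∀ x y : ℝ, x = 0 ∨ y = 0 → g x y = 0) {i j : ℕ} (hji : j ≠ i) :
    ∫⁻ ω in {ω | T ω = i ∧ T₂ ω = j}, sizeBiasCorrection g (w ω (T ω)) (w ω (T₂ ω)) ∂μ
      = ∫⁻ ω, g (w ω i) (w ω j) ∂μ := by
  have hfiber : MeasurableSet {ω | T ω = i ∧ T₂ ω = j} :=
    (hT (measurableSet_singleton i)).inter (hT₂ (measurableSet_singleton j))
  rw [setLIntegral_congr_fun hfiber (g := fun ω => sizeBiasCorrection g (w ω i) (w ω j))
      fun ω hω => by rw [hω.1, hω.2],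
    IsSecondSizeBiasedIndex.setLIntegral_eq hsb hsb2 hji (f := fun v => sizeBiasCorrection g (v i) (v j))
      ((measurable_sizeBiasCorrection hg).comp (f := fun v : ℕ → ℝ => (v i, v j)) (by fun_prop))]
  refine lintegral_congr_ae ?_
  filter_upwards [hnn, hsum] with ω hn hs
  exact ofReal_mul_ofReal_div_mul_sizeBiasCorrection hg0 (hn i) (hn j)
    (add_le_one_of_tsum_eq_one hn hs (Ne.symm hji))

end SizeBiased

theorem second_sizeBiased_expectation_general {Ω : Type*} [MeasurableSpace Ω]
    (μ : Measure Ω)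
    (w : Ω → ℕ → ℝ) (T T₂ : Ω → ℕ)
    (hw : Measurable w) (hT : Measurable T) (hT₂ : Measurable T₂)
    (hnn : ∀ᵐ ω ∂μ, ∀ i, 0 ≤ w ω i)
    (hsum : ∀ᵐ ω ∂μ, ∑' i, w ω i = 1)
    (hsb : ∀ i : ℕ, ∀ g : (ℕ → ℝ) → ℝ≥0∞, Measurable g →
      ∫⁻ ω in {ω | T ω = i}, g (w ω) ∂μ = ∫⁻ ω, ENNReal.ofReal (w ω i) * g (w ω) ∂μ)
    (hne : ∀ᵐ ω ∂μ, T₂ ω ≠ T ω)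
    (hsb2 : ∀ i j : ℕ, j ≠ i → ∀ g : (ℕ → ℝ) → ℝ≥0∞, Measurable g →
      ∫⁻ ω in {ω | T ω = i ∧ T₂ ω = j}, g (w ω) ∂μ
        = ∫⁻ ω in {ω | T ω = i}, ENNReal.ofReal (w ω j / (1 - w ω i)) * g (w ω) ∂μ)
    (g : ℝ → ℝ → ℝ≥0∞) (hg : Measurable (Function.uncurry g))
    (hg0 : ∀ x y : ℝ, x = 0 ∨ y = 0 → g x y = 0) :
    ∫⁻ ω, ∑' i, ∑' j, (if j = i then 0 else g (w ω i) (w ω j)) ∂μ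
      = ∫⁻ ω, g (w ω (T ω)) (w ω (T₂ ω)) * ENNReal.ofReal (1 - w ω (T ω))
          / (ENNReal.ofReal (w ω (T ω)) * ENNReal.ofReal (w ω (T₂ ω))) ∂μ := by
  have hsummand : ∀ i j, Measurable fun ω => if j = i then 0 else g (w ω i) (w ω j) := by
    intro i j
    split_ifs
    exacts [measurable_const,
      hg.comp (((measurable_pi_apply i).comp hw).prodMk ((measurable_pi_apply j).comp hw))]
  have hpair_fiber : ∀ i j,
      (fun ω => (T ω, T₂ ω)) ⁻¹' {(i, j)} = {ω | T ω = i ∧ T₂ ω = j} :=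
    fun i j => Set.ext fun ω => Prod.ext_iff
  change _ = ∫⁻ ω, sizeBiasCorrection g (w ω (T ω)) (w ω (T₂ ω)) ∂μ
  rw [lintegral_tsum fun i => (Measurable.tsum (hsummand i)).aemeasurable,
    lintegral_eq_tsum_setLIntegral_fiber (hT.prodMk hT₂), ENNReal.tsum_prod']
  refine tsum_congr fun i => ?_
  rw [lintegral_tsum fun j => (hsummand i j).aemeasurable]
  refine tsum_congr fun j => ?_
  rw [hpair_fiber]
  split_ifs with hji
  · rw [lintegral_zero, hji, setLIntegral_diagonal_eq_zero hne]
  · exact (IsSecondSizeBiasedIndex.setLIntegral_sizeBiasCorrection hT hT₂ hnn hsum hsb hsb2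
      hg hg0 hji).symm

/-- **Second size-biased sampling identity.** Let `w` be a random probability sequence, `T` a
size-biased index for `w` (i.e. `P(T = i | w) = wᵢ`), and `T₂` a second size-biased index
(i.e. `P(T₂ = j | w, T) = wⱼ/(1 − w_T)` for `j ≠ T`, and `P(T₂ = T | w, T) = 0`). Then for
every measurable `g : (0,1]² → [0,∞]`, extended by `g x y = 0` when `x = 0` or `y = 0`,
`E[∑ᵢ ∑_{j≠i} g(wᵢ, wⱼ)] = E[g(w_T, w_{T₂}) (1 − w_T)/(w_T w_{T₂})]`,
both sides interpreted in `[0,∞]`. -/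
theorem second_sizeBiased_expectation {Ω : Type*} [MeasurableSpace Ω]
    (μ : Measure Ω) [IsProbabilityMeasure μ]
    (w : Ω → ℕ → ℝ) (T T₂ : Ω → ℕ)
    (hw : Measurable w) (hT : Measurable T) (hT₂ : Measurable T₂)
    (hnn : ∀ᵐ ω ∂μ, ∀ i, 0 ≤ w ω i)
    (hsum : ∀ᵐ ω ∂μ, ∑' i, w ω i = 1)
    (hsb : ∀ i : ℕ, ∀ g : (ℕ → ℝ) → ℝ≥0∞, Measurable g →
      ∫⁻ ω in {ω | T ω = i}, g (w ω) ∂μ = ∫⁻ ω, ENNReal.ofReal (w ω i) * g (w ω) ∂μ)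
    (hne : ∀ᵐ ω ∂μ, T₂ ω ≠ T ω)
    (hsb2 : ∀ i j : ℕ, j ≠ i → ∀ g : (ℕ → ℝ) → ℝ≥0∞, Measurable g →
      ∫⁻ ω in {ω | T ω = i ∧ T₂ ω = j}, g (w ω) ∂μ
        = ∫⁻ ω in {ω | T ω = i}, ENNReal.ofReal (w ω j / (1 - w ω i)) * g (w ω) ∂μ)
    (g : ℝ → ℝ → ℝ≥0∞) (hg : Measurable (Function.uncurry g))
    (hg0 : ∀ x y : ℝ, x = 0 ∨ y = 0 → g x y = 0) :
    ∫⁻ ω, ∑' i, ∑' j, (if j = i then 0 else g (w ω i) (w ω j)) ∂μ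
      = ∫⁻ ω, g (w ω (T ω)) (w ω (T₂ ω)) * ENNReal.ofReal (1 - w ω (T ω))
          / (ENNReal.ofReal (w ω (T ω)) * ENNReal.ofReal (w ω (T₂ ω))) ∂μ :=
  second_sizeBiased_expectation_general μ w T T₂ hw hT hT₂ hnn hsum hsb hne hsb2 g hg hg0
end

section
/- Let π be a random probability sequence, T a size-biased index for π, and suppose that π_T has the Beta(1−d, α+d) distribution, where 0 ≤ d < 1 and α > −d. Then the expected entropy satisfies E[ −Σᵢ πᵢ log πᵢ ] = ψ₀(α+1) − ψ₀(1−d). -/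
/-!
Size-biasing turns a sum over the atoms into a value at the sampled atom:
`E[∑ᵢ πᵢ f(πᵢ)] = E[f(π_T)]` for every `f ≥ 0`. With `f = -log` the expected entropy becomes
`E[-log π_T] = ∫ -log x Beta(a, b)(dx)`, `a = 1 - d`, `b = α + d`. Differentiating
`B(t, b) = ∫₀¹ x^(t-1) (1-x)^(b-1) dx = Γ(t)Γ(b)/Γ(t+b)` under the integral sign at `t = a`
gives `∫₀¹ log x · x^(a-1) (1-x)^(b-1) dx = B(a, b) (ψ₀(a) - ψ₀(a+b))`, so the expected entropy is
`ψ₀(a+b) - ψ₀(a) = ψ₀(α+1) - ψ₀(1-d)`, nonnegative since `ψ₀` is increasing (`log Γ` is convex).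
-/

open MeasureTheory ENNReal

/-- The `Beta(a,b)` distribution on `(0,1)`, with density `x^{a−1}(1−x)^{b−1}/B(a,b)`. -/
noncomputable def betaMeasure (a b : ℝ) : Measure ℝ :=
  (volume.restrict (Set.Ioo (0 : ℝ) 1)).withDensity fun x =>
    ENNReal.ofReal (x ^ (a - 1) * (1 - x) ^ (b - 1) /
      (Real.Gamma a * Real.Gamma b / Real.Gamma (a + b)))

open Set Filter Topology
open ProbabilityTheory (beta beta_pos lintegral_betaPDF lintegral_betaPDF_eq_one)

noncomputable def betaKernel (a b x : ℝ) : ℝ := x ^ (a - 1) * (1 - x) ^ (b - 1)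

@[fun_prop]
lemma measurable_betaKernel (a b : ℝ) : Measurable (betaKernel a b) := by
  unfold betaKernel; fun_prop

lemma betaKernel_nonneg (a b : ℝ) {x : ℝ} (hx : x ∈ Ioo 0 1) : 0 ≤ betaKernel a b x :=
  mul_nonneg (Real.rpow_nonneg hx.1.le _) (Real.rpow_nonneg (sub_nonneg.2 hx.2.le) _)

lemma lintegral_betaKernel {a b : ℝ} (ha : 0 < a) (hb : 0 < b) :
    ∫⁻ x in Ioo 0 1, ENNReal.ofReal (betaKernel a b x) = ENNReal.ofReal (beta a b) := by
  have hB := beta_pos ha hb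
  have h := lintegral_betaPDF_eq_one ha hb
  simp_rw [lintegral_betaPDF, mul_assoc, ENNReal.ofReal_mul (one_div_pos.2 hB).le] at h
  rw [lintegral_const_mul' _ _ ofReal_ne_top] at h
  have hL := ENNReal.eq_inv_of_mul_eq_one_left ((mul_comm _ _).trans h)
  rwa [one_div, ← ofReal_inv_of_pos (inv_pos.2 hB), inv_inv] at hL

lemma integrableOn_betaKernel {a b : ℝ} (ha : 0 < a) (hb : 0 < b) :
    IntegrableOn (betaKernel a b) (Ioo 0 1) := by
  refine ⟨(measurable_betaKernel a b).aestronglyMeasurable, ?_⟩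
  rw [hasFiniteIntegral_iff_ofReal (ae_restrict_of_forall_mem measurableSet_Ioo
    fun x hx => betaKernel_nonneg a b hx), lintegral_betaKernel ha hb]
  exact ofReal_lt_top

lemma integral_betaKernel {a b : ℝ} (ha : 0 < a) (hb : 0 < b) :
    ∫ x in Ioo 0 1, betaKernel a b x = beta a b := by
  rw [integral_eq_lintegral_of_nonneg_ae (ae_restrict_of_forall_mem measurableSet_Ioo
    fun x hx => betaKernel_nonneg a b hx) (measurable_betaKernel a b).aestronglyMeasurable,
    lintegral_betaKernel ha hb, toReal_ofReal (beta_pos ha hb).le]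

lemma neg_log_le_rpow_neg_div {x s : ℝ} (hx : 0 < x) (hs : 0 < s) :
    -Real.log x ≤ x ^ (-s) / s := by
  simpa [Real.log_inv, Real.inv_rpow hx.le, Real.rpow_neg hx.le] using
    Real.log_le_rpow_div (inv_nonneg.2 hx.le) hs

lemma integrableOn_log_mul_betaKernel {a b : ℝ} (ha : 0 < a) (hb : 0 < b) :
    IntegrableOn (fun x => Real.log x * betaKernel a b x) (Ioo 0 1) := by
  refine ((integrableOn_betaKernel (half_pos ha) hb).const_mul (2 / a)).mono'
    (by fun_prop) (ae_restrict_of_forall_mem measurableSet_Ioo fun x hx => ?_)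
  have hlog : |Real.log x| ≤ 2 / a * x ^ (-(a / 2)) := by
    rw [abs_of_nonpos (Real.log_nonpos hx.1.le hx.2.le)]
    calc -Real.log x ≤ x ^ (-(a / 2)) / (a / 2) := neg_log_le_rpow_neg_div hx.1 (half_pos ha)
      _ = 2 / a * x ^ (-(a / 2)) := by field_simp
  calc ‖Real.log x * betaKernel a b x‖ = |Real.log x| * betaKernel a b x := by
        rw [norm_mul, Real.norm_of_nonneg (betaKernel_nonneg a b hx), Real.norm_eq_abs]
    _ ≤ 2 / a * x ^ (-(a / 2)) * betaKernel a b x :=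
        mul_le_mul_of_nonneg_right hlog (betaKernel_nonneg a b hx)
    _ = 2 / a * betaKernel (a / 2) b x := by
        rw [betaKernel, betaKernel, mul_assoc, ← mul_assoc (x ^ _), ← Real.rpow_add hx.1]
        ring_nf

lemma hasDerivAt_betaKernel_left (b : ℝ) {x : ℝ} (hx : 0 < x) (t : ℝ) :
    HasDerivAt (fun s => betaKernel s b x) (Real.log x * betaKernel t b x) t := by
  refine ((((hasDerivAt_id t).sub_const 1).const_rpow hx).mul_const
    ((1 - x) ^ (b - 1))).congr_deriv ?_
  simp only [betaKernel, id]
  ring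

lemma hasDerivAt_integral_betaKernel {a b : ℝ} (ha : 0 < a) (hb : 0 < b) :
    HasDerivAt (fun t => ∫ x in Ioo 0 1, betaKernel t b x)
      (∫ x in Ioo 0 1, Real.log x * betaKernel a b x) a := by
  refine (hasDerivAt_integral_of_dominated_loc_of_deriv_le (F := fun t x => betaKernel t b x)
    (F' := fun t x => Real.log x * betaKernel t b x) (Metric.ball_mem_nhds a (half_pos ha))
    (Eventually.of_forall fun t => by fun_prop) (integrableOn_betaKernel ha hb) (by fun_prop)
    (bound := fun x => ‖Real.log x * betaKernel (a / 2) b x‖) ?_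
    (integrableOn_log_mul_betaKernel (half_pos ha) hb).norm ?_).2
  · filter_upwards [ae_restrict_mem measurableSet_Ioo] with x hx t ht
    have hta : a / 2 - 1 ≤ t - 1 := by
      linarith [(abs_lt.1 (Real.dist_eq t a ▸ Metric.mem_ball.1 ht)).1]
    rw [norm_mul, norm_mul, Real.norm_of_nonneg (betaKernel_nonneg t b hx),
      Real.norm_of_nonneg (betaKernel_nonneg _ b hx)]
    exact mul_le_mul_of_nonneg_left (mul_le_mul_of_nonneg_right
      (Real.rpow_le_rpow_of_exponent_ge hx.1 hx.2.le hta)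
      (Real.rpow_nonneg (sub_nonneg.2 hx.2.le) _)) (norm_nonneg _)
  · filter_upwards [ae_restrict_mem measurableSet_Ioo] with x hx t _
    exact hasDerivAt_betaKernel_left b hx.1 t

lemma hasDerivAt_log_Gamma {x : ℝ} (hx : 0 < x) :
    HasDerivAt (fun y => Real.log (Real.Gamma y)) (digamma x) x :=
  ((Real.differentiableAt_Gamma fun m => by linarith [(m.cast_nonneg : (0 : ℝ) ≤ m)]).log
    (Real.Gamma_pos_of_pos hx).ne').hasDerivAt

lemma digamma_monotoneOn : MonotoneOn digamma (Ioi 0) :=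
  Real.convexOn_log_Gamma.monotoneOn_deriv fun _ hx => (hasDerivAt_log_Gamma hx).differentiableAt

lemma hasDerivAt_log_beta {a b : ℝ} (ha : 0 < a) (hb : 0 < b) :
    HasDerivAt (fun t => Real.log (beta t b)) (digamma a - digamma (a + b)) a := by
  have hsplit : (fun t => Real.log (Real.Gamma t) + Real.log (Real.Gamma b) -
      Real.log (Real.Gamma (t + b))) =ᶠ[𝓝 a] fun t => Real.log (beta t b) := by
    filter_upwards [eventually_gt_nhds ha] with t ht
    rw [beta, Real.log_div (mul_pos (Real.Gamma_pos_of_pos ht) (Real.Gamma_pos_of_pos hb)).ne'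
      (Real.Gamma_pos_of_pos (by linarith)).ne', Real.log_mul (Real.Gamma_pos_of_pos ht).ne'
      (Real.Gamma_pos_of_pos hb).ne']
  exact (((hasDerivAt_log_Gamma ha).add_const _).sub
    ((hasDerivAt_log_Gamma (add_pos ha hb)).comp_add_const a b)).congr_of_eventuallyEq hsplit.symm

lemma integral_log_mul_betaKernel {a b : ℝ} (ha : 0 < a) (hb : 0 < b) :
    ∫ x in Ioo 0 1, Real.log x * betaKernel a b x = beta a b * (digamma a - digamma (a + b)) := by
  have hbeta : HasDerivAt (fun t => beta t b) (∫ x in Ioo 0 1, Real.log x * betaKernel a b x) a :=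
    (hasDerivAt_integral_betaKernel ha hb).congr_of_eventuallyEq <| by
      filter_upwards [eventually_gt_nhds ha] with t ht using (integral_betaKernel ht hb).symm
  have h := (hbeta.log (beta_pos ha hb).ne').unique (hasDerivAt_log_beta ha hb)
  rw [← h, mul_div_cancel₀ _ (beta_pos ha hb).ne']

lemma lintegral_ofReal_neg_log_betaMeasure {a b : ℝ} (ha : 0 < a) (hb : 0 < b) :
    ∫⁻ x, ENNReal.ofReal (-Real.log x) ∂betaMeasure a b =
      ENNReal.ofReal (digamma (a + b) - digamma a) := by
  have hB := beta_pos ha hb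
  have hnonneg : ∀ x ∈ Ioo (0 : ℝ) 1, 0 ≤ -(Real.log x * betaKernel a b x) / beta a b :=
    fun x hx => div_nonneg (neg_nonneg.2 (mul_nonpos_of_nonpos_of_nonneg
      (Real.log_nonpos hx.1.le hx.2.le) (betaKernel_nonneg a b hx))) hB.le
  calc ∫⁻ x, ENNReal.ofReal (-Real.log x) ∂betaMeasure a b
      = ∫⁻ x in Ioo 0 1, ENNReal.ofReal (-(Real.log x * betaKernel a b x) / beta a b) := by
        rw [betaMeasure, lintegral_withDensity_eq_lintegral_mul _ (by fun_prop) (by fun_prop)]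
        refine setLIntegral_congr_fun measurableSet_Ioo fun x hx => ?_
        change ENNReal.ofReal (betaKernel a b x / beta a b) * _ = _
        rw [← ofReal_mul (div_nonneg (betaKernel_nonneg a b hx) hB.le)]
        congr 1
        ring
    _ = ENNReal.ofReal (∫ x in Ioo 0 1, -(Real.log x * betaKernel a b x) / beta a b) :=
        (ofReal_integral_eq_lintegral_ofReal
          ((integrableOn_log_mul_betaKernel ha hb).neg.div_const _)
          (ae_restrict_of_forall_mem measurableSet_Ioo hnonneg)).symm
    _ = ENNReal.ofReal (digamma (a + b) - digamma a) := by
        rw [integral_div, integral_neg, integral_log_mul_betaKernel ha hb, neg_div,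
          mul_div_cancel_left₀ _ hB.ne', neg_sub]

lemma lintegral_tsum_ofReal_mul_eq_lintegral_sizeBiased {Ω ι : Type*} [MeasurableSpace Ω]
    [Countable ι] [MeasurableSpace ι] [MeasurableSingletonClass ι] {μ : Measure Ω}
    {w : Ω → ι → ℝ} {T : Ω → ι} (hw : Measurable w) (hT : Measurable T)
    (hsb : ∀ i : ι, ∀ g : (ι → ℝ) → ℝ≥0∞, Measurable g →
      ∫⁻ ω in {ω | T ω = i}, g (w ω) ∂μ = ∫⁻ ω, ENNReal.ofReal (w ω i) * g (w ω) ∂μ)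
    {h : ℝ → ℝ≥0∞} (hh : Measurable h) :
    ∫⁻ ω, ∑' i, ENNReal.ofReal (w ω i) * h (w ω i) ∂μ = ∫⁻ ω, h (w ω (T ω)) ∂μ := by
  have hlevel : ∀ i, MeasurableSet (T ⁻¹' {i}) := fun i => hT (measurableSet_singleton i)
  calc ∫⁻ ω, ∑' i, ENNReal.ofReal (w ω i) * h (w ω i) ∂μ
      = ∑' i, ∫⁻ ω, ENNReal.ofReal (w ω i) * h (w ω i) ∂μ :=
        lintegral_tsum fun i => by fun_prop
    _ = ∑' i, ∫⁻ ω in T ⁻¹' {i}, h (w ω (T ω)) ∂μ := by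
        refine tsum_congr fun i => ?_
        rw [← hsb i (fun v => h (v i)) (by fun_prop)]
        exact setLIntegral_congr_fun (hlevel i) fun ω (hω : T ω = i) => by rw [hω]
    _ = ∫⁻ ω, h (w ω (T ω)) ∂μ := by
        rw [← lintegral_iUnion hlevel (pairwise_disjoint_fiber T), ← preimage_iUnion,
          iUnion_of_singleton, preimage_univ, Measure.restrict_univ]

lemma le_one_of_tsum_eq_one {ι : Type*} {p : ι → ℝ} (h0 : ∀ i, 0 ≤ p i) (h1 : ∑' i, p i = 1)
    (i : ι) : p i ≤ 1 := by
  have hp : Summable p := by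
    by_contra hp
    simp [tsum_eq_zero_of_not_summable hp] at h1
  exact h1 ▸ hp.le_tsum i fun j _ => h0 j

lemma neg_tsum_mul_log_eq_toReal_tsum {ι : Type*} {p : ι → ℝ} (h0 : ∀ i, 0 ≤ p i)
    (h1 : ∀ i, p i ≤ 1) :
    -∑' i, p i * Real.log (p i) =
      (∑' i, ENNReal.ofReal (p i) * ENNReal.ofReal (-Real.log (p i))).toReal := by
  rw [ENNReal.tsum_toReal_eq fun i => mul_ne_top ofReal_ne_top ofReal_ne_top, ← tsum_neg]
  refine tsum_congr fun i => ?_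
  rw [← ofReal_mul (h0 i), toReal_ofReal (mul_nonneg (h0 i)
    (neg_nonneg.2 (Real.log_nonpos (h0 i) (h1 i)))), mul_neg]

theorem expected_entropy_of_sizeBiased_beta_general {Ω : Type*} [MeasurableSpace Ω]
    (μ : Measure Ω)
    (w : Ω → ℕ → ℝ) (T : Ω → ℕ)
    (hw : Measurable w) (hT : Measurable T)
    (hnn : ∀ᵐ ω ∂μ, ∀ i, 0 ≤ w ω i)
    (hsum : ∀ᵐ ω ∂μ, ∑' i, w ω i = 1)
    (hsb : ∀ i : ℕ, ∀ g : (ℕ → ℝ) → ℝ≥0∞, Measurable g →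
      ∫⁻ ω in {ω | T ω = i}, g (w ω) ∂μ = ∫⁻ ω, ENNReal.ofReal (w ω i) * g (w ω) ∂μ)
    (d α : ℝ) (hd1 : d < 1) (hα : -d < α)
    (hlaw : Measure.map (fun ω => w ω (T ω)) μ = betaMeasure (1 - d) (α + d)) :
    ∫ ω, (-(∑' i, w ω i * Real.log (w ω i))) ∂μ = digamma (α + 1) - digamma (1 - d) := by
  have ha : 0 < 1 - d := by linarith
  have hb : 0 < α + d := by linarith
  have hwT : Measurable fun ω => w ω (T ω) :=
    (measurable_from_prod_countable_left (f := fun p : (ℕ → ℝ) × ℕ => p.1 p.2)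
      measurable_pi_apply).comp (hw.prodMk hT)
  set G : Ω → ℝ≥0∞ := fun ω => ∑' i, ENNReal.ofReal (w ω i) * ENNReal.ofReal (-Real.log (w ω i))
  have hG : ∫⁻ ω, G ω ∂μ = ENNReal.ofReal (digamma (α + 1) - digamma (1 - d)) := by
    simp only [G]
    rw [lintegral_tsum_ofReal_mul_eq_lintegral_sizeBiased hw hT hsb
        (h := fun x => ENNReal.ofReal (-Real.log x)) (by fun_prop),
      ← lintegral_map (f := fun x => ENNReal.ofReal (-Real.log x)) (by fun_prop) hwT, hlaw,
      lintegral_ofReal_neg_log_betaMeasure ha hb, show 1 - d + (α + d) = α + 1 by ring]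
  have hGfin : ∀ᵐ ω ∂μ, G ω < ∞ := ae_lt_top' (by fun_prop) (hG ▸ ofReal_ne_top)
  calc ∫ ω, (-(∑' i, w ω i * Real.log (w ω i))) ∂μ = ∫ ω, (G ω).toReal ∂μ := by
        refine integral_congr_ae ?_
        filter_upwards [hnn, hsum] with ω h0 h1
        exact neg_tsum_mul_log_eq_toReal_tsum h0 (le_one_of_tsum_eq_one h0 h1)
    _ = digamma (α + 1) - digamma (1 - d) := by
        rw [integral_toReal (by fun_prop) hGfin, hG, toReal_ofReal (sub_nonneg.2
          (digamma_monotoneOn (mem_Ioi.2 ha) (mem_Ioi.2 (by linarith)) (by linarith)))]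

/-- **Mean entropy under a Pitman–Yor-type prior.** Let `w` be a random probability sequence
and `T` a size-biased index for `w`. If `w_T ∼ Beta(1−d, α+d)` with `0 ≤ d < 1`, `α > −d`,
then `E[−∑ᵢ wᵢ log wᵢ] = ψ₀(α+1) − ψ₀(1−d)`. -/
theorem expected_entropy_of_sizeBiased_beta {Ω : Type*} [MeasurableSpace Ω]
    (μ : Measure Ω) [IsProbabilityMeasure μ]
    (w : Ω → ℕ → ℝ) (T : Ω → ℕ)
    (hw : Measurable w) (hT : Measurable T)
    (hnn : ∀ᵐ ω ∂μ, ∀ i, 0 ≤ w ω i)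
    (hsum : ∀ᵐ ω ∂μ, ∑' i, w ω i = 1)
    (hsb : ∀ i : ℕ, ∀ g : (ℕ → ℝ) → ℝ≥0∞, Measurable g →
      ∫⁻ ω in {ω | T ω = i}, g (w ω) ∂μ = ∫⁻ ω, ENNReal.ofReal (w ω i) * g (w ω) ∂μ)
    (d α : ℝ) (hd0 : 0 ≤ d) (hd1 : d < 1) (hα : -d < α)
    (hlaw : Measure.map (fun ω => w ω (T ω)) μ = betaMeasure (1 - d) (α + d)) :
    ∫ ω, (-(∑' i, w ω i * Real.log (w ω i))) ∂μ = digamma (α + 1) - digamma (1 - d) :=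
  expected_entropy_of_sizeBiased_beta_general μ w T hw hT hnn hsum hsb d α hd1 hα hlaw
end

section
/- Fix observed counts n₁, …, n_K with K ≥ 1, each nᵢ ≥ 1, and N = Σᵢ nᵢ with N > K. Then for all 0 ≤ d < 1 and α > 0, the Pitman–Yor evidence satisfies p(x|d,α) ≤ (∏ᵢ₌₁^K Γ(nᵢ−d)/Γ(1−d)) · Γ(α+K)/Γ(α+N) ≤ (∏ᵢ₌₁^K Γ(nᵢ−d)/Γ(1−d)) · α^{−(N−K)}. -/
open MeasureTheory Finset

/-- The Pitman–Yor evidence for counts `n₁,…,n_K` with `N = ∑ nᵢ`: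
`p(x|d,α) = (∏_{l=1}^{K−1}(α+ld)) (∏ᵢ Γ(nᵢ−d)) Γ(1+α) / (Γ(1−d)^K Γ(α+N))`. -/
noncomputable def pyEvidence (K : ℕ) (n : Fin K → ℕ) (d α : ℝ) : ℝ :=
  (∏ l ∈ Finset.Icc 1 (K - 1), (α + l * d)) * (∏ i, Real.Gamma ((n i : ℝ) - d))
    * Real.Gamma (1 + α)
    / (Real.Gamma (1 - d) ^ K * Real.Gamma (α + ∑ i, (n i : ℝ)))

lemma gamma_add_nat_eq (α : ℝ) (hα : 0 < α) (m : ℕ) :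
    ∀ p : ℕ, m ≤ p →
      Real.Gamma (α + p) = Real.Gamma (α + m) * ∏ j ∈ Finset.Ico m p, (α + j) := by
  intro p
  induction p with
  | zero =>
    intro h
    have : m = 0 := Nat.le_zero.mp h
    subst this; simp
  | succ p ih =>
    intro h
    rcases Nat.lt_or_ge m (p+1) with h' | h'
    · have hmp : m ≤ p := Nat.lt_succ_iff.mp h'
      have hpos : (0:ℝ) < α + p := by positivity
      have : Real.Gamma (α + (p+1 : ℕ)) = (α + p) * Real.Gamma (α + p) := by
        push_cast
        rw [show α + ((p:ℝ)+1) = (α + p) + 1 by ring, Real.Gamma_add_one (ne_of_gt hpos)]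
      rw [this, ih hmp, Finset.prod_Ico_succ_top hmp]
      ring
    · have : m = p + 1 := le_antisymm h h'
      subst this; simp

theorem pyEvidence_upper_bounds_aux (K : ℕ) (hK : 1 ≤ K) (n : Fin K → ℕ)
    (hn : ∀ i, 1 ≤ n i) (hNK : K < ∑ i, n i)
    (d α : ℝ) (hd0 : 0 ≤ d) (hd1 : d < 1) (hα : 0 < α) :
    ((∏ l ∈ Finset.Icc 1 (K - 1), (α + l * d)) * (∏ i, Real.Gamma ((n i : ℝ) - d))
    * Real.Gamma (1 + α)
    / (Real.Gamma (1 - d) ^ K * Real.Gamma (α + ∑ i, (n i : ℝ))))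
        ≤ (∏ i, Real.Gamma ((n i : ℝ) - d) / Real.Gamma (1 - d)) *
            (Real.Gamma (α + K) / Real.Gamma (α + ∑ i, (n i : ℝ)))
    ∧ (∏ i, Real.Gamma ((n i : ℝ) - d) / Real.Gamma (1 - d)) *
          (Real.Gamma (α + K) / Real.Gamma (α + ∑ i, (n i : ℝ)))
        ≤ (∏ i, Real.Gamma ((n i : ℝ) - d) / Real.Gamma (1 - d)) *
            (α ^ ((∑ i, n i) - K))⁻¹ := by
  set N : ℕ := ∑ i, n i with hN
  have hNc : ∑ i, ((n i : ℝ)) = (N : ℝ) := by push_cast [hN]; ring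
  rw [hNc]
  have hG1d : 0 < Real.Gamma (1 - d) := Real.Gamma_pos_of_pos (by linarith)
  have hGn : ∀ i, 0 < Real.Gamma ((n i : ℝ) - d) := fun i =>
    Real.Gamma_pos_of_pos (by
      have : (1:ℝ) ≤ (n i : ℝ) := by exact_mod_cast hn i
      linarith)
  have hGN : 0 < Real.Gamma (α + N) := Real.Gamma_pos_of_pos (by positivity)
  have hGK : 0 < Real.Gamma (α + K) := Real.Gamma_pos_of_pos (by positivity)
  have hG1α : 0 < Real.Gamma (1 + α) := Real.Gamma_pos_of_pos (by linarith)
  have hKN : K ≤ N := le_of_lt hNK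
  -- Γ(α+K) = Γ(1+α) * ∏_{Icc 1 (K-1)} (α + l)
  have hIccIco : Finset.Icc 1 (K - 1) = Finset.Ico 1 K := by
    rw [show K = K - 1 + 1 by omega, Finset.Ico_add_one_right_eq_Icc]
    simp
  have key1 : Real.Gamma (α + K) = Real.Gamma (1 + α) * ∏ l ∈ Finset.Icc 1 (K-1), (α + l) := by
    rw [hIccIco, gamma_add_nat_eq α hα 1 K hK]
    norm_num [add_comm α 1]
  -- Γ(α+N) ≥ Γ(α+K) * α^(N-K)
  have key2 : Real.Gamma (α + K) * α ^ (N - K) ≤ Real.Gamma (α + N) := by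
    rw [gamma_add_nat_eq α hα K N hKN]
    have : α ^ (N - K) ≤ ∏ j ∈ Finset.Ico K N, (α + j) := by
      rw [show N - K = (Finset.Ico K N).card by rw [Nat.card_Ico]]
      rw [← Finset.prod_const]
      exact Finset.prod_le_prod (fun j _ => le_of_lt hα)
        (fun j _ => le_add_of_nonneg_right (by positivity))
    nlinarith [hGK]
  -- rewrite the product of quotients
  have hprod : ∏ i, Real.Gamma ((n i : ℝ) - d) / Real.Gamma (1 - d)
      = (∏ i, Real.Gamma ((n i : ℝ) - d)) / Real.Gamma (1 - d) ^ K := by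
    rw [Finset.prod_div_distrib, Finset.prod_const, Finset.card_univ, Fintype.card_fin]
  have hB : 0 < ∏ i, Real.Gamma ((n i : ℝ) - d) := Finset.prod_pos (fun i _ => hGn i)
  constructor
  · rw [hprod, div_mul_div_comm]
    have hden : (0:ℝ) < Real.Gamma (1 - d) ^ K * Real.Gamma (α + N) := by positivity
    rw [div_le_div_iff₀ hden hden]
    apply mul_le_mul_of_nonneg_right ?_ (le_of_lt hden)
    rw [key1]
    have hP : (∏ l ∈ Finset.Icc 1 (K-1), (α + l * d)) ≤ ∏ l ∈ Finset.Icc 1 (K-1), (α + l) := by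
      apply Finset.prod_le_prod
      · intro l _; positivity
      · intro l _
        have : (l:ℝ) * d ≤ l := by
          nlinarith [Nat.cast_nonneg (α := ℝ) l]
        linarith
    calc (∏ l ∈ Finset.Icc 1 (K-1), (α + l * d)) * (∏ i, Real.Gamma ((n i : ℝ) - d))
          * Real.Gamma (1 + α)
        ≤ (∏ l ∈ Finset.Icc 1 (K-1), (α + l)) * (∏ i, Real.Gamma ((n i : ℝ) - d))
          * Real.Gamma (1 + α) := by
          apply mul_le_mul_of_nonneg_right (mul_le_mul_of_nonneg_right hP (le_of_lt hB))
            (le_of_lt hG1α)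
      _ = (∏ i, Real.Gamma ((n i : ℝ) - d)) *
            (Real.Gamma (1 + α) * ∏ l ∈ Finset.Icc 1 (K-1), (α + l)) := by ring
  · apply mul_le_mul_of_nonneg_left ?_
      (Finset.prod_nonneg fun i _ => le_of_lt (div_pos (hGn i) hG1d))
    rw [div_le_iff₀ hGN]
    calc Real.Gamma (α + K) = Real.Gamma (α + K) * α ^ (N-K) / α ^ (N-K) := by
            field_simp
      _ ≤ Real.Gamma (α + N) / α ^ (N-K) := by
            apply div_le_div_of_nonneg_right key2 (by positivity)
      _ = (α ^ (N-K))⁻¹ * Real.Gamma (α + N) := by ring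

/-- **Upper bounds on the Pitman–Yor evidence.** For counts with `N > K`, all `0 ≤ d < 1`
and `α > 0`:
`p(x|d,α) ≤ (∏ᵢ Γ(nᵢ−d)/Γ(1−d)) Γ(α+K)/Γ(α+N) ≤ (∏ᵢ Γ(nᵢ−d)/Γ(1−d)) α^{−(N−K)}`. -/
theorem pyEvidence_upper_bounds (K : ℕ) (hK : 1 ≤ K) (n : Fin K → ℕ)
    (hn : ∀ i, 1 ≤ n i) (hNK : K < ∑ i, n i)
    (d α : ℝ) (hd0 : 0 ≤ d) (hd1 : d < 1) (hα : 0 < α) :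
    pyEvidence K n d α
        ≤ (∏ i, Real.Gamma ((n i : ℝ) - d) / Real.Gamma (1 - d)) *
            (Real.Gamma (α + K) / Real.Gamma (α + ∑ i, (n i : ℝ)))
    ∧ (∏ i, Real.Gamma ((n i : ℝ) - d) / Real.Gamma (1 - d)) *
          (Real.Gamma (α + K) / Real.Gamma (α + ∑ i, (n i : ℝ)))
        ≤ (∏ i, Real.Gamma ((n i : ℝ) - d) / Real.Gamma (1 - d)) *
            (α ^ ((∑ i, n i) - K))⁻¹ := by
  have h := pyEvidence_upper_bounds_aux K hK n hn hNK d α hd0 hd1 hα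
  exact ⟨by unfold pyEvidence; exact h.1, h.2⟩
end

section
/- Fix 0 ≤ d < 1 and α > −d. Let X₁, X₂, … be i.i.d. samples from a fixed (finite or countably infinite) discrete distribution π, and suppose K_N/N → 0 in probability. Then | E[H|d,α,x_N] − Ĥ_plugin(N) | → 0 in probability as N → ∞. -/
open MeasureTheory ProbabilityTheory Filter Finset

variable {Ω : Type*}

/-- `nᵢ(N) = #{j < N : Xⱼ = i}`, the count of symbol `i` among the first `N` samples. -/
def sampleCount (X : ℕ → Ω → ℕ) (N i : ℕ) (ω : Ω) : ℕ :=
  ((Finset.range N).filter fun j => X j ω = i).card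

/-- The set of observed symbols among the first `N` samples. -/
def observedSymbols (X : ℕ → Ω → ℕ) (N : ℕ) (ω : Ω) : Finset ℕ :=
  (Finset.range N).image fun j => X j ω

/-- `K_N`, the number of distinct observed symbols among the first `N` samples. -/
def numDistinct (X : ℕ → Ω → ℕ) (N : ℕ) (ω : Ω) : ℕ :=
  (observedSymbols X N ω).card

/-- The plugin entropy estimator `Ĥ_plugin(N) = −∑ᵢ (nᵢ/N) log(nᵢ/N)`. -/
noncomputable def pluginEntropy (X : ℕ → Ω → ℕ) (N : ℕ) (ω : Ω) : ℝ :=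
  -∑ i ∈ observedSymbols X N ω,
    ((sampleCount X N i ω : ℝ) / N) * Real.log ((sampleCount X N i ω : ℝ) / N)

/-- `E[H|d,α,x_N] = ψ₀(α+N+1) − ((α+K_N d)/(α+N)) ψ₀(1−d)
  − (1/(α+N)) ∑_{i : nᵢ>0} (nᵢ−d) ψ₀(nᵢ−d+1)`. -/
noncomputable def pyPostMeanEntropy (X : ℕ → Ω → ℕ) (d α : ℝ) (N : ℕ) (ω : Ω) : ℝ :=
  digamma (α + N + 1)
    - ((α + numDistinct X N ω * d) / (α + N)) * digamma (1 - d)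
    - (1 / (α + N)) * ∑ i ∈ observedSymbols X N ω,
        ((sampleCount X N i ω : ℝ) - d) * digamma ((sampleCount X N i ω : ℝ) - d + 1)

/-!
The estimate is deterministic: on every sample path and for `N ≥ 2`,
`|E[H|d,α,x_N] − Ĥ_plugin(N)| ≤ C ((1 + log N)/N + K_N/N + √(K_N/N))` with `C` depending
only on `d` and `α`.
Convexity of `log Γ` gives `log x ≤ ψ₀(x + 1) ≤ log (x + 1)`, so each summand
`(nᵢ − d) ψ₀(nᵢ − d + 1)` is `nᵢ log nᵢ` up to `2 + log nᵢ`, and Cauchy–Schwarz bounds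
`∑ᵢ log nᵢ` by `2 √(K_N N)`. Hence the difference tends to `0` in probability whenever
`K_N / N` does.
-/

open Real

lemma differentiableAt_log_Gamma {x : ℝ} (hx : 0 < x) :
    DifferentiableAt ℝ (log ∘ Gamma) x :=
  (differentiableAt_Gamma fun m => ne_of_gt (by linarith [Nat.cast_nonneg (α := ℝ) m])).log
    (Gamma_pos_of_pos hx).ne'

lemma slope_log_Gamma_add_one {x : ℝ} (hx : 0 < x) :
    slope (log ∘ Gamma) x (x + 1) = log x := by
  rw [slope_def_field, add_sub_cancel_left, div_one, Function.comp_apply, Function.comp_apply,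
    Gamma_add_one hx.ne', log_mul hx.ne' (Gamma_pos_of_pos hx).ne', add_sub_cancel_right]

/- Both bounds compare a tangent of the convex function `log ∘ Gamma` with its chord over
`[x, x + 1]`, whose slope is `log x` because `Γ(x + 1) = x Γ(x)`. -/
lemma digamma_le_log {x : ℝ} (hx : 0 < x) : digamma x ≤ log x := by
  have h := convexOn_log_Gamma.deriv_le_slope hx (by linarith : (0 : ℝ) < x + 1) (lt_add_one x)
    (differentiableAt_log_Gamma hx)
  rwa [slope_log_Gamma_add_one hx] at h

lemma log_le_digamma_add_one {x : ℝ} (hx : 0 < x) : log x ≤ digamma (x + 1) := by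
  have h := convexOn_log_Gamma.slope_le_deriv hx (by linarith : (0 : ℝ) < x + 1) (lt_add_one x)
    (differentiableAt_log_Gamma (by linarith))
  rwa [slope_log_Gamma_add_one hx] at h

lemma log_sub_log_le_div {x y : ℝ} (hx : 0 < x) (hy : 0 < y) :
    log y - log x ≤ (y - x) / x := by
  rw [← log_div hy.ne' hx.ne', sub_div, div_self hx.ne']
  exact log_le_sub_one_of_pos (div_pos hy hx)

lemma abs_log_sub_log_le {x y : ℝ} (hx : 0 < x) (hy : 0 < y) :
    |log y - log x| ≤ |y - x| / min x y := by
  have hmin : 0 < min x y := lt_min hx hy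
  rw [abs_le]
  constructor
  · calc -(|y - x| / min x y) ≤ -((x - y) / y) := by
          rw [neg_le_neg_iff, abs_sub_comm]
          exact div_le_div₀ (abs_nonneg _) (le_abs_self _) hmin (min_le_right x y)
      _ ≤ log y - log x := by linarith [log_sub_log_le_div hy hx]
  · calc log y - log x ≤ (y - x) / x := log_sub_log_le_div hx hy
      _ ≤ |y - x| / min x y := div_le_div₀ (abs_nonneg _) (le_abs_self _) hmin (min_le_left x y)

lemma abs_digamma_add_one_sub_log_le {x : ℝ} (hx : 0 < x) :
    |digamma (x + 1) - log x| ≤ 1 / x := by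
  have hchord : log (x + 1) - log x ≤ 1 / x := by
    simpa using log_sub_log_le_div hx (by linarith : 0 < x + 1)
  have hpos : 0 < 1 / x := by positivity
  rw [abs_le]
  constructor
  · linarith [log_le_digamma_add_one hx]
  · linarith [digamma_le_log (by linarith : 0 < x + 1)]

lemma log_le_two_mul_sqrt {x : ℝ} (hx : 0 ≤ x) : log x ≤ 2 * √x := by
  have h := log_le_rpow_div hx (by norm_num : (0 : ℝ) < 1 / 2)
  rw [sqrt_eq_rpow]
  linarith

lemma abs_sub_mul_digamma_sub_mul_log_le {d x : ℝ} (hd0 : 0 ≤ d) (hd1 : d < 1) (hx : 1 ≤ x) :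
    |(x - d) * digamma (x - d + 1) - x * log x| ≤ 2 + log x := by
  set t := x - d
  have ht : 0 < t := by linarith
  have hlogx : 0 ≤ log x := log_nonneg hx
  have hdigamma : |t * digamma (t + 1) - t * log t| ≤ 1 := by
    rw [← mul_sub, abs_mul, abs_of_pos ht]
    calc t * |digamma (t + 1) - log t| ≤ t * (1 / t) :=
          mul_le_mul_of_nonneg_left (abs_digamma_add_one_sub_log_le ht) ht.le
      _ = 1 := mul_one_div_cancel ht.ne'
  have hlog : log x - log t ≤ d / t := by
    simpa [t] using log_sub_log_le_div ht (by linarith : 0 < x)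
  have hmono : t * log t ≤ x * log x :=
    calc t * log t ≤ t * log x := mul_le_mul_of_nonneg_left (log_le_log ht (by linarith)) ht.le
      _ ≤ x * log x := mul_le_mul_of_nonneg_right (by linarith) hlogx
  have hgap : x * log x - t * log t ≤ 1 + log x :=
    calc x * log x - t * log t = d * log x + t * (log x - log t) := by ring
      _ ≤ 1 * log x + t * (d / t) := by gcongr
      _ ≤ 1 + log x := by rw [mul_div_cancel₀ d ht.ne']; linarith
  rw [abs_le] at hdigamma ⊢
  constructor <;> linarith [hdigamma.1, hdigamma.2]

lemma sum_log_le_two_mul_sqrt_card_mul_sum {ι : Type*} (s : Finset ι) {f : ι → ℝ}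
    (hf : ∀ i ∈ s, 0 ≤ f i) : ∑ i ∈ s, log (f i) ≤ 2 * √(#s * ∑ i ∈ s, f i) := by
  have hcs : (∑ i ∈ s, √(f i)) ^ 2 ≤ #s * ∑ i ∈ s, f i := by
    refine sq_sum_le_card_mul_sum_sq.trans_eq ?_
    rw [sum_congr rfl fun i hi => sq_sqrt (hf i hi)]
  calc ∑ i ∈ s, log (f i) ≤ ∑ i ∈ s, 2 * √(f i) :=
        sum_le_sum fun i hi => log_le_two_mul_sqrt (hf i hi)
    _ = 2 * ∑ i ∈ s, √(f i) := (mul_sum _ _ _).symm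
    _ ≤ 2 * √(#s * ∑ i ∈ s, f i) := by gcongr; exact le_sqrt_of_sq_le hcs

lemma tendsto_one_add_log_div_atTop :
    Tendsto (fun N : ℕ => (1 + log N) / N) atTop (nhds 0) := by
  have h := (tendsto_inv_atTop_zero.add
    (tendsto_pow_log_div_mul_add_atTop 1 0 1 one_ne_zero)).comp tendsto_natCast_atTop_atTop
  simpa [add_div, Function.comp_def] using h

section Counts

variable {X : ℕ → Ω → ℕ} {N : ℕ} {ω : Ω}

lemma one_le_sampleCount {i : ℕ} (hi : i ∈ observedSymbols X N ω) : 1 ≤ sampleCount X N i ω := by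
  obtain ⟨j, hj, rfl⟩ := mem_image.1 hi
  exact card_pos.2 ⟨j, mem_filter.2 ⟨hj, rfl⟩⟩

variable (X N ω)

lemma sum_sampleCount : ∑ i ∈ observedSymbols X N ω, sampleCount X N i ω = N := by
  simpa [sampleCount] using (card_eq_sum_card_fiberwise (f := fun j => X j ω) (s := range N)
    (t := observedSymbols X N ω) fun j hj => mem_image_of_mem _ hj).symm

lemma sum_cast_sampleCount : ∑ i ∈ observedSymbols X N ω, (sampleCount X N i ω : ℝ) = N := by
  exact_mod_cast sum_sampleCount X N ω

noncomputable def sumCountMulLog : ℝ :=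
  ∑ i ∈ observedSymbols X N ω, (sampleCount X N i ω : ℝ) * log (sampleCount X N i ω)

lemma sumCountMulLog_nonneg : 0 ≤ sumCountMulLog X N ω :=
  sum_nonneg fun i hi =>
    mul_nonneg (Nat.cast_nonneg _) (log_nonneg (by exact_mod_cast one_le_sampleCount hi))

lemma sumCountMulLog_le : sumCountMulLog X N ω ≤ N * log N := by
  calc sumCountMulLog X N ω
      ≤ ∑ i ∈ observedSymbols X N ω, (sampleCount X N i ω : ℝ) * log N := by
        refine sum_le_sum fun i hi => mul_le_mul_of_nonneg_left (log_le_log ?_ ?_) ?_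
        · exact_mod_cast one_le_sampleCount hi
        · rw [← sum_cast_sampleCount X N ω]
          exact single_le_sum (fun j _ => Nat.cast_nonneg (sampleCount X N j ω)) hi
        · positivity
    _ = N * log N := by rw [← sum_mul, sum_cast_sampleCount]

lemma pluginEntropy_eq (hN : 0 < N) :
    pluginEntropy X N ω = log N - sumCountMulLog X N ω / N := by
  have hN' : (N : ℝ) ≠ 0 := by positivity
  have hterm : ∀ i ∈ observedSymbols X N ω,
      (sampleCount X N i ω : ℝ) / N * log ((sampleCount X N i ω : ℝ) / N) =
        ((sampleCount X N i ω : ℝ) * log (sampleCount X N i ω)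
          - (sampleCount X N i ω : ℝ) * log N) / N := fun i hi => by
    have : (sampleCount X N i ω : ℝ) ≠ 0 :=
      Nat.cast_ne_zero.2 (Nat.one_le_iff_ne_zero.1 (one_le_sampleCount hi))
    rw [log_div this hN']
    ring
  rw [pluginEntropy, sum_congr rfl hterm, ← sum_div, sum_sub_distrib, ← sum_mul,
    sum_cast_sampleCount, sumCountMulLog]
  field_simp
  ring

end Counts

noncomputable def sumCountMulDigamma (X : ℕ → Ω → ℕ) (d : ℝ) (N : ℕ) (ω : Ω) : ℝ :=
  ∑ i ∈ observedSymbols X N ω,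
    ((sampleCount X N i ω : ℝ) - d) * digamma ((sampleCount X N i ω : ℝ) - d + 1)

lemma abs_sumCountMulDigamma_sub_sumCountMulLog_le (X : ℕ → Ω → ℕ) {d : ℝ} (hd0 : 0 ≤ d)
    (hd1 : d < 1) (N : ℕ) (ω : Ω) :
    |sumCountMulDigamma X d N ω - sumCountMulLog X N ω| ≤
      2 * numDistinct X N ω + 2 * √(numDistinct X N ω * N) := by
  set s := observedSymbols X N ω
  have hcount : ∀ i ∈ s, (1 : ℝ) ≤ sampleCount X N i ω := fun i hi => by
    exact_mod_cast one_le_sampleCount hi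
  have hlog := sum_log_le_two_mul_sqrt_card_mul_sum s
    (f := fun i => (sampleCount X N i ω : ℝ)) fun i _ => Nat.cast_nonneg _
  rw [sum_cast_sampleCount] at hlog
  calc |sumCountMulDigamma X d N ω - sumCountMulLog X N ω|
      ≤ ∑ i ∈ s, (2 + log (sampleCount X N i ω)) := by
        rw [sumCountMulDigamma, sumCountMulLog, ← sum_sub_distrib]
        exact (abs_sum_le_sum_abs _ _).trans
          (sum_le_sum fun i hi => abs_sub_mul_digamma_sub_mul_log_le hd0 hd1 (hcount i hi))
    _ = 2 * numDistinct X N ω + ∑ i ∈ s, log (sampleCount X N i ω) := by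
        rw [sum_add_distrib, sum_const, nsmul_eq_mul, mul_comm, numDistinct]
    _ ≤ 2 * numDistinct X N ω + 2 * √(numDistinct X N ω * N) := by
        rw [numDistinct]; gcongr

lemma pyPostMeanEntropy_sub_pluginEntropy_eq (X : ℕ → Ω → ℕ) {d α : ℝ} {N : ℕ} (ω : Ω)
    (hN : 0 < N) (ha : α + N ≠ 0) :
    pyPostMeanEntropy X d α N ω - pluginEntropy X N ω =
      (digamma (α + N + 1) - log (α + N)) + (log (α + N) - log N)
        - (α + numDistinct X N ω * d) * digamma (1 - d) / (α + N)
        - (sumCountMulDigamma X d N ω - sumCountMulLog X N ω) / (α + N)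
        + α * sumCountMulLog X N ω / (N * (α + N)) := by
  rw [pluginEntropy_eq X N ω hN, pyPostMeanEntropy, ← sumCountMulDigamma]
  field_simp
  ring

lemma abs_pyPostMeanEntropy_sub_pluginEntropy_le_div (X : ℕ → Ω → ℕ) {d α : ℝ} (hd0 : 0 ≤ d)
    (hd1 : d < 1) {N : ℕ} (hN : 0 < N) (ha : 0 < α + N) (ω : Ω) :
    |pyPostMeanEntropy X d α N ω - pluginEntropy X N ω| ≤
      (1 + (|α| + numDistinct X N ω) * |digamma (1 - d)| + 2 * numDistinct X N ω
        + 2 * √(numDistinct X N ω * N) + |α| * log N) / (α + N) + |α| / min (N : ℝ) (α + N) := by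
  rw [pyPostMeanEntropy_sub_pluginEntropy_eq X ω hN ha.ne']
  set K : ℝ := (numDistinct X N ω : ℝ)
  set S := sumCountMulLog X N ω
  set S' := sumCountMulDigamma X d N ω
  set ψ := digamma (1 - d)
  set a := α + N
  have hNpos : (0 : ℝ) < N := by exact_mod_cast hN
  have hK : 0 ≤ K := Nat.cast_nonneg _
  have h1 : |digamma (a + 1) - log a| ≤ 1 / a := abs_digamma_add_one_sub_log_le ha
  have h2 : |log a - log N| ≤ |α| / min (N : ℝ) a := by
    simpa [a] using abs_log_sub_log_le hNpos ha
  have h3 : |(α + K * d) * ψ / a| ≤ (|α| + K) * |ψ| / a := by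
    rw [abs_div, abs_mul, abs_of_pos ha]
    gcongr
    calc |α + K * d| ≤ |α| + K * d := by
          simpa [abs_of_nonneg (mul_nonneg hK hd0)] using abs_add_le α (K * d)
      _ ≤ |α| + K := by nlinarith
  have h4 : |(S' - S) / a| ≤ (2 * K + 2 * √(K * N)) / a := by
    rw [abs_div, abs_of_pos ha]
    gcongr
    exact abs_sumCountMulDigamma_sub_sumCountMulLog_le X hd0 hd1 N ω
  have h5 : |α * S / (N * a)| ≤ |α| * log N / a := by
    rw [abs_div, abs_mul, abs_of_nonneg (sumCountMulLog_nonneg X N ω),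
      abs_of_pos (mul_pos hNpos ha), div_le_div_iff₀ (by positivity) ha]
    calc |α| * S * a ≤ |α| * (N * log N) * a := by
          gcongr; exact sumCountMulLog_le X N ω
      _ = |α| * log N * (N * a) := by ring
  rw [abs_le] at h1 h2 h3 h4 h5
  calc _ ≤ 1 / a + |α| / min (N : ℝ) a + (|α| + K) * |ψ| / a + (2 * K + 2 * √(K * N)) / a
        + |α| * log N / a := by
        rw [abs_le]
        constructor <;> linarith [h1.1, h1.2, h2.1, h2.2, h3.1, h3.2, h4.1, h4.2, h5.1, h5.2]
    _ = _ := by ring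

lemma abs_pyPostMeanEntropy_sub_pluginEntropy_le (X : ℕ → Ω → ℕ) {d α : ℝ} (hd0 : 0 ≤ d)
    (hd1 : d < 1) (hα : -1 < α) {N : ℕ} (hN : 2 ≤ N) (ω : Ω) :
    |pyPostMeanEntropy X d α N ω - pluginEntropy X N ω| ≤
      4 * (1 + |α|) * (1 + |digamma (1 - d)|) * ((1 + log N) / N
        + numDistinct X N ω / N + √(numDistinct X N ω / N)) := by
  have hN2 : (2 : ℝ) ≤ N := by exact_mod_cast hN
  have hbound := abs_pyPostMeanEntropy_sub_pluginEntropy_le_div X hd0 hd1 (N := N) (by omega)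
    (by linarith) ω
  set K : ℝ := (numDistinct X N ω : ℝ)
  set ψ := digamma (1 - d)
  have hK : 0 ≤ K := Nat.cast_nonneg _
  have hlogN : 0 ≤ log N := log_nonneg (by linarith)
  have hmin : |α| / min (N : ℝ) (α + N) ≤ 2 * |α| / N :=
    calc |α| / min (N : ℝ) (α + N) ≤ |α| / (N / 2) :=
          div_le_div_of_nonneg_left (abs_nonneg α) (by positivity)
            (le_min (by linarith) (by linarith))
      _ = 2 * |α| / N := by ring
  have hsqrt : √(K * N) = √(K / N) * N := by
    rw [show K * N = K / N * N ^ 2 by field_simp, sqrt_mul' _ (sq_nonneg _), sqrt_sq (by linarith)]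
  calc _ ≤ (1 + (|α| + K) * |ψ| + 2 * K + 2 * √(K * N) + |α| * log N) / (N / 2)
        + 2 * |α| / N := by
        refine hbound.trans (add_le_add ?_ hmin)
        gcongr; linarith
    _ ≤ 4 * (1 + |α|) * (1 + |ψ|) * (1 + log N + K + √(K * N)) / N := by
        rw [div_div_eq_mul_div, ← add_div]
        gcongr
        nlinarith [abs_nonneg α, abs_nonneg ψ, mul_nonneg (abs_nonneg α) (abs_nonneg ψ),
          sqrt_nonneg (K * N)]
    _ = _ := by rw [hsqrt]; field_simp

lemma tendsto_measure_le_abs_of_abs_le_add [MeasurableSpace Ω] (μ : Measure Ω)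
    {Y Z : ℕ → Ω → ℝ} {b : ℕ → ℝ} {g : ℝ → ℝ} (hb : Tendsto b atTop (nhds 0))
    (hg : Tendsto g (nhds 0) (nhds 0)) (hZ0 : ∀ N ω, 0 ≤ Z N ω)
    (hZ : ∀ ε > (0 : ℝ), Tendsto (fun N => μ {ω | ε ≤ Z N ω}) atTop (nhds 0))
    (hY : ∀ᶠ N in atTop, ∀ ω, |Y N ω| ≤ b N + g (Z N ω)) :
    ∀ ε > (0 : ℝ), Tendsto (fun N => μ {ω | ε ≤ |Y N ω|}) atTop (nhds 0) := by
  intro ε hε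
  obtain ⟨δ, hδ, hgδ⟩ := Metric.tendsto_nhds_nhds.1 hg (ε / 2) (half_pos hε)
  refine tendsto_of_tendsto_of_tendsto_of_le_of_le' tendsto_const_nhds (hZ δ hδ)
    (Eventually.of_forall fun _ => zero_le) ?_
  filter_upwards [hY, hb.eventually (gt_mem_nhds (half_pos hε))] with N hYN hbN
  refine measure_mono fun ω (hω : ε ≤ |Y N ω|) => ?_
  by_contra hsmall
  have hgZ : |g (Z N ω)| < ε / 2 := by
    simpa using hgδ (by simpa [abs_of_nonneg (hZ0 N ω)] using (not_le.1 hsmall))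
  linarith [hYN ω, le_abs_self (g (Z N ω))]

theorem pyPostMeanEntropy_consistent_general [MeasurableSpace Ω]
    (μ : Measure Ω)
    (X : ℕ → Ω → ℕ)
    (d α : ℝ) (hd0 : 0 ≤ d) (hd1 : d < 1) (hα : -d < α)
    (hK : ∀ ε > (0 : ℝ),
      Tendsto (fun N => μ {ω | ε ≤ (numDistinct X N ω : ℝ) / N}) atTop (nhds 0)) :
    ∀ ε > (0 : ℝ),
      Tendsto (fun N =>
          μ {ω | ε ≤ |pyPostMeanEntropy X d α N ω - pluginEntropy X N ω|})
        atTop (nhds 0) := by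
  set C := 4 * (1 + |α|) * (1 + |digamma (1 - d)|)
  refine tendsto_measure_le_abs_of_abs_le_add μ (b := fun N => C * ((1 + log N) / N))
    (g := fun z => C * (z + √z)) ?_ ?_ (fun N ω => by positivity) hK ?_
  · simpa using tendsto_one_add_log_div_atTop.const_mul C
  · simpa using ((continuous_id.add continuous_sqrt).tendsto 0).const_mul C
  · filter_upwards [eventually_ge_atTop 2] with N hN ω
    exact (abs_pyPostMeanEntropy_sub_pluginEntropy_le X hd0 hd1 (by linarith) hN ω).trans_eq
      (by ring)

/-- **Consistency of the fixed-parameter Pitman–Yor posterior mean.** Fix `0 ≤ d < 1` and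
`α > −d`. If `X₁, X₂, …` are i.i.d. samples from a fixed discrete distribution `p` on `ℕ`
and `K_N/N → 0` in probability, then `|E[H|d,α,x_N] − Ĥ_plugin(N)| → 0` in probability. -/
theorem pyPostMeanEntropy_consistent [MeasurableSpace Ω]
    (μ : Measure Ω) [IsProbabilityMeasure μ]
    (X : ℕ → Ω → ℕ) (hX : ∀ j, Measurable (X j))
    (hindep : iIndepFun X μ)
    (p : ℕ → ℝ) (hp : ∀ i, 0 ≤ p i) (hp1 : ∑' i, p i = 1)
    (hlaw : ∀ j i, μ {ω | X j ω = i} = ENNReal.ofReal (p i))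
    (d α : ℝ) (hd0 : 0 ≤ d) (hd1 : d < 1) (hα : -d < α)
    (hK : ∀ ε > (0 : ℝ),
      Tendsto (fun N => μ {ω | ε ≤ (numDistinct X N ω : ℝ) / N}) atTop (nhds 0)) :
    ∀ ε > (0 : ℝ),
      Tendsto (fun N =>
          μ {ω | ε ≤ |pyPostMeanEntropy X d α N ω - pluginEntropy X N ω|})
        atTop (nhds 0) :=
  pyPostMeanEntropy_consistent_general μ X d α hd0 hd1 hα hK
end

section
/- For all integers K ≥ 1 and N ≥ K + 3, and every real α₀ > 0: ∫_{α₀}^∞ (N + α − 1) · Γ(α+K)/Γ(α+N) dα ≤ Γ(α₀+K) / ( (N−K−2) · Γ(N+α₀−2) ). -/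
/-!
With `M = N - 2`, the functional equation turns the integrand into `P(α) / (α + M)`, where
`P(α) = Γ(α + K) / Γ(α + M) = ∏_{K ≤ j < M} (α + j)⁻¹`. Since `-P' = P · ∑_{K ≤ j < M} (α + j)⁻¹`
and each of the `M - K` summands is at least `(α + M)⁻¹`, the integrand is at most
`-P' / (M - K)`, whose tail integral is `P(α₀) / (M - K)` because `P → 0` at infinity.
-/

open MeasureTheory Filter Topology Finset Set

theorem Real.Gamma_div_Gamma_add_nat {x : ℝ} {K M : ℕ} (hx : 0 < x + K) (hKM : K ≤ M) :
    Real.Gamma (x + K) / Real.Gamma (x + M) = ∏ j ∈ Ico K M, (x + j)⁻¹ := by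
  induction M, hKM using Nat.le_induction with
  | base => simp [(Real.Gamma_pos_of_pos hx).ne']
  | succ M hKM ih =>
    have hxM : 0 < x + M := hx.trans_le (by gcongr)
    rw [prod_Ico_succ_top hKM, ← ih, Nat.cast_succ, ← add_assoc,
      Real.Gamma_add_one hxM.ne']
    field_simp

section TailIntegral

variable {ι : Type*} {s : Finset ι} {c : ι → ℝ}

theorem hasDerivAt_neg_prod_add_inv {x : ℝ} (hx : ∀ i ∈ s, x + c i ≠ 0) :
    HasDerivAt (fun y ↦ -∏ i ∈ s, (y + c i)⁻¹)
      ((∏ i ∈ s, (x + c i)⁻¹) * ∑ i ∈ s, (x + c i)⁻¹) x := by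
  classical
  have hfactor (i : ι) (hi : i ∈ s) :
      HasDerivAt (fun y ↦ (y + c i)⁻¹) (-((x + c i) ^ 2)⁻¹) x := by
    simpa [neg_div, Pi.inv_def] using ((hasDerivAt_id x).add_const (c i)).inv (hx i hi)
  refine (HasDerivAt.fun_finsetProd hfactor).neg.congr_deriv ?_
  rw [mul_sum, ← sum_neg_distrib]
  refine sum_congr rfl fun i hi ↦ ?_
  rw [← prod_erase_mul s _ hi, smul_eq_mul, sq, mul_inv]
  ring

theorem tendsto_prod_add_inv_atTop_zero (hs : s.Nonempty) :
    Tendsto (fun x ↦ ∏ i ∈ s, (x + c i)⁻¹) atTop (𝓝 0) := by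
  have h := tendsto_finsetProd s fun i _ ↦
    (tendsto_atTop_add_const_right atTop (c i) tendsto_id).inv_tendsto_atTop
  rwa [prod_const, zero_pow hs.card_pos.ne'] at h

variable {a : ℝ}

theorem integrableOn_Ioi_prod_add_inv_mul_sum_inv (hs : s.Nonempty)
    (ha : ∀ i ∈ s, 0 < a + c i) :
    IntegrableOn (fun x ↦ (∏ i ∈ s, (x + c i)⁻¹) * ∑ i ∈ s, (x + c i)⁻¹) (Ioi a) := by
  have hpos {x : ℝ} (hx : a ≤ x) (i : ι) (hi : i ∈ s) : 0 < x + c i := by linarith [ha i hi]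
  refine integrableOn_Ioi_deriv_of_nonneg'
    (fun x hx ↦ hasDerivAt_neg_prod_add_inv fun i hi ↦ (hpos hx i hi).ne')
    (fun x hx ↦ ?_) (tendsto_prod_add_inv_atTop_zero hs).neg
  have hinv_pos (i : ι) (hi : i ∈ s) := inv_pos.2 (hpos (le_of_lt hx) i hi)
  exact mul_nonneg (prod_nonneg fun i hi ↦ (hinv_pos i hi).le)
    (sum_nonneg fun i hi ↦ (hinv_pos i hi).le)

theorem integral_Ioi_prod_add_inv_mul_sum_inv (hs : s.Nonempty) (ha : ∀ i ∈ s, 0 < a + c i) :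
    ∫ x in Ioi a, (∏ i ∈ s, (x + c i)⁻¹) * ∑ i ∈ s, (x + c i)⁻¹ = ∏ i ∈ s, (a + c i)⁻¹ := by
  have hpos {x : ℝ} (hx : a ≤ x) (i : ι) (hi : i ∈ s) : 0 < x + c i := by linarith [ha i hi]
  simpa using integral_Ioi_of_hasDerivAt_of_tendsto'
    (fun x hx ↦ hasDerivAt_neg_prod_add_inv fun i hi ↦ (hpos hx i hi).ne')
    (integrableOn_Ioi_prod_add_inv_mul_sum_inv hs ha) (tendsto_prod_add_inv_atTop_zero hs).neg

theorem integral_Ioi_prod_add_inv_mul_inv_le (hs : s.Nonempty) (ha : ∀ i ∈ s, 0 < a + c i)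
    {b : ℝ} (hb : ∀ i ∈ s, c i ≤ b) :
    ∫ x in Ioi a, (∏ i ∈ s, (x + c i)⁻¹) * (x + b)⁻¹ ≤ (∏ i ∈ s, (a + c i)⁻¹) / #s := by
  have hpos {x : ℝ} (hx : x ∈ Ioi a) (i : ι) (hi : i ∈ s) : 0 < x + c i := by
    linarith [ha i hi, mem_Ioi.1 hx]
  have hprod_nonneg {x : ℝ} (hx : x ∈ Ioi a) : 0 ≤ ∏ i ∈ s, (x + c i)⁻¹ :=
    prod_nonneg fun i hi ↦ (inv_pos.2 (hpos hx i hi)).le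
  have hb_pos {x : ℝ} (hx : x ∈ Ioi a) : 0 < x + b := by
    obtain ⟨i, hi⟩ := hs
    linarith [hpos hx i hi, hb i hi]
  have hcard : (0 : ℝ) < #s := by exact_mod_cast hs.card_pos
  have hpointwise {x : ℝ} (hx : x ∈ Ioi a) :
      (∏ i ∈ s, (x + c i)⁻¹) * (x + b)⁻¹
        ≤ (#s : ℝ)⁻¹ * ((∏ i ∈ s, (x + c i)⁻¹) * ∑ i ∈ s, (x + c i)⁻¹) := by
    have hsum : #s • (x + b)⁻¹ ≤ ∑ i ∈ s, (x + c i)⁻¹ :=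
      card_nsmul_le_sum s _ _ fun i hi ↦ inv_anti₀ (hpos hx i hi) (by linarith [hb i hi])
    rw [nsmul_eq_mul] at hsum
    rw [inv_mul_eq_div, le_div_iff₀' hcard, mul_left_comm]
    exact mul_le_mul_of_nonneg_left hsum (hprod_nonneg hx)
  calc ∫ x in Ioi a, (∏ i ∈ s, (x + c i)⁻¹) * (x + b)⁻¹
      ≤ ∫ x in Ioi a, (#s : ℝ)⁻¹ * ((∏ i ∈ s, (x + c i)⁻¹) * ∑ i ∈ s, (x + c i)⁻¹) :=
        integral_mono_of_nonneg
          (ae_restrict_of_forall_mem measurableSet_Ioi fun x hx ↦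
            mul_nonneg (hprod_nonneg hx) (inv_pos.2 (hb_pos hx)).le)
          ((integrableOn_Ioi_prod_add_inv_mul_sum_inv hs ha).const_mul _)
          (ae_restrict_of_forall_mem measurableSet_Ioi fun x hx ↦ hpointwise hx)
    _ = (∏ i ∈ s, (a + c i)⁻¹) / #s := by
        rw [integral_const_mul, integral_Ioi_prod_add_inv_mul_sum_inv hs ha, inv_mul_eq_div]

end TailIntegral

theorem Real.add_one_mul_Gamma_div_Gamma_add_two {x : ℝ} {K M : ℕ} (hx : 0 < x + K) (hKM : K ≤ M) :
    (x + M + 1) * (Real.Gamma (x + K) / Real.Gamma (x + M + 2))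
      = (∏ j ∈ Ico K M, (x + j)⁻¹) * (x + M)⁻¹ := by
  have hxM : 0 < x + M := hx.trans_le (by gcongr)
  have hΓ : Real.Gamma (x + M + 2) = (x + M + 1) * (x + M) * Real.Gamma (x + M) := by
    rw [show x + M + 2 = x + M + 1 + 1 by ring, Real.Gamma_add_one (by positivity),
      Real.Gamma_add_one hxM.ne']
    ring
  rw [← Real.Gamma_div_Gamma_add_nat hx hKM, hΓ]
  field_simp

theorem gamma_ratio_tail_integral_bound_general (K N : ℕ) (hN : K + 3 ≤ N)
    (α₀ : ℝ) (hα₀ : 0 < α₀) :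
    ∫ α in Set.Ioi α₀, ((N : ℝ) + α - 1) * (Real.Gamma (α + K) / Real.Gamma (α + N))
      ≤ Real.Gamma (α₀ + K) / (((N : ℝ) - K - 2) * Real.Gamma ((N : ℝ) + α₀ - 2)) := by
  obtain ⟨M, rfl⟩ : ∃ M, N = M + 2 := ⟨N - 2, by omega⟩
  have hKM : K < M := by omega
  have hpos {x : ℝ} (hx : α₀ ≤ x) (j : ℕ) : 0 < x + j := by
    have := hα₀.trans_le hx
    positivity
  push_cast
  calc ∫ α in Ioi α₀, ((M : ℝ) + 2 + α - 1) * (Real.Gamma (α + K) / Real.Gamma (α + (M + 2)))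
      = ∫ α in Ioi α₀, (∏ j ∈ Ico K M, (α + j)⁻¹) * (α + M)⁻¹ := by
        refine setIntegral_congr_fun measurableSet_Ioi fun α hα ↦ ?_
        rw [← Real.add_one_mul_Gamma_div_Gamma_add_two (hpos (le_of_lt hα) K) hKM.le]
        ring_nf
    _ ≤ (∏ j ∈ Ico K M, (α₀ + j)⁻¹) / #(Ico K M) :=
        integral_Ioi_prod_add_inv_mul_inv_le (nonempty_Ico.2 hKM) (fun j _ ↦ hpos le_rfl j)
          fun j hj ↦ by exact_mod_cast (mem_Ico.1 hj).2.le
    _ = Real.Gamma (α₀ + K) / (((M : ℝ) + 2 - K - 2) * Real.Gamma ((M : ℝ) + 2 + α₀ - 2)) := by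
        rw [← Real.Gamma_div_Gamma_add_nat (hpos le_rfl K) hKM.le, Nat.card_Ico,
          Nat.cast_sub hKM.le, div_div]
        ring_nf

/-- **Tail integral bound.** For integers `K ≥ 1`, `N ≥ K + 3` and real `α₀ > 0`:
`∫_{α₀}^∞ (N + α − 1) Γ(α+K)/Γ(α+N) dα ≤ Γ(α₀+K)/((N−K−2) Γ(N+α₀−2))`. -/
theorem gamma_ratio_tail_integral_bound (K N : ℕ) (hK : 1 ≤ K) (hN : K + 3 ≤ N)
    (α₀ : ℝ) (hα₀ : 0 < α₀) :
    ∫ α in Set.Ioi α₀, ((N : ℝ) + α - 1) * (Real.Gamma (α + K) / Real.Gamma (α + N))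
      ≤ Real.Gamma (α₀ + K) / (((N : ℝ) - K - 2) * Real.Gamma ((N : ℝ) + α₀ - 2)) :=
  gamma_ratio_tail_integral_bound_general K N hN α₀ hα₀
end

section
/- For all integers K ≥ 1 and N ≥ K + 2: ∫₀^∞ α^{K−1} · Γ(1+α)/Γ(α+N) dα ≥ Γ(K) Γ(K+1) Γ(N−K−1) / ( Γ(N−1) Γ(N) ). -/
/-!
Write `Γ(1+α)/Γ(α+m) = Γ(m-1)⁻¹ ∫₀¹ t^α (1-t)^(m-2) dt` (a Beta integral) and swap the
integrals by Tonelli: the `α`-integral becomes the Gamma integral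
`∫₀^∞ α^(k-1) e^{-α (-log t)} dα = Γ(k) (-log t)^(-k)`. The bound `-log t ≤ (1-t)/t` then bounds
the remaining `t`-integral below by `Γ(k)/Γ(m-1) · B(k+1, m-k-1)`, which is the claimed constant,
while `1-t ≤ -log t` bounds it above by a finite Beta integral, so the Bochner integral agrees with
the Lebesgue one.
-/

open MeasureTheory Set Real

lemma lintegral_rpow_mul_one_sub_rpow_eq_beta {a b : ℝ} (ha : 0 < a) (hb : 0 < b) :
    ∫⁻ x in Ioo 0 1, ENNReal.ofReal (x ^ (a - 1) * (1 - x) ^ (b - 1)) =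
      ENNReal.ofReal (ProbabilityTheory.beta a b) := by
  have hB := ProbabilityTheory.beta_pos ha hb
  have h := ProbabilityTheory.lintegral_betaPDF_eq_one ha hb
  simp_rw [ProbabilityTheory.lintegral_betaPDF, mul_assoc,
    ENNReal.ofReal_mul (one_div_pos.2 hB).le] at h
  rw [lintegral_const_mul' _ _ ENNReal.ofReal_ne_top, one_div,
    ENNReal.ofReal_inv_of_pos hB] at h
  exact (ENNReal.mul_inv_cancel_left (ENNReal.ofReal_pos.2 hB).ne' ENNReal.ofReal_ne_top).symm.trans
    (by rw [h, mul_one])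

lemma lintegral_rpow_mul_exp_neg_mul_Ioi {a r : ℝ} (ha : 0 < a) (hr : 0 < r) :
    ∫⁻ t in Ioi 0, ENNReal.ofReal (t ^ (a - 1) * exp (-(r * t))) =
      ENNReal.ofReal ((1 / r) ^ a * Gamma a) := by
  rw [← integral_rpow_mul_exp_neg_mul_Ioi ha hr, ofReal_integral_eq_lintegral_ofReal]
  · simpa [rpow_one, IntegrableOn] using
      integrableOn_rpow_mul_exp_neg_mul_rpow (by linarith) one_pos hr
  · filter_upwards [ae_restrict_mem measurableSet_Ioi] with t ht
    exact mul_nonneg (rpow_nonneg (le_of_lt ht) _) (exp_pos _).le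

lemma ofReal_Gamma_div_Gamma_eq_lintegral {s m : ℝ} (hs : -1 < s) (hm : 1 < m) :
    ENNReal.ofReal (Gamma (1 + s) / Gamma (s + m)) =
      ∫⁻ t in Ioo 0 1, ENNReal.ofReal ((Gamma (m - 1))⁻¹ * (t ^ s * (1 - t) ^ (m - 2))) := by
  have hΓ : 0 < Gamma (m - 1) := Gamma_pos_of_pos (by linarith)
  have h := lintegral_rpow_mul_one_sub_rpow_eq_beta (a := 1 + s) (b := m - 1) (by linarith)
    (by linarith)
  rw [show 1 + s - 1 = s by ring, show m - 1 - 1 = m - 2 by ring] at h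
  simp_rw [ENNReal.ofReal_mul (inv_pos.2 hΓ).le]
  rw [lintegral_const_mul' _ _ ENNReal.ofReal_ne_top, h, ← ENNReal.ofReal_mul (inv_pos.2 hΓ).le,
    ProbabilityTheory.beta, show 1 + s + (m - 1) = s + m by ring]
  congr 1
  field_simp

theorem lintegral_rpow_mul_Gamma_div_Gamma_eq {k m : ℝ} (hk : 0 < k) (hm : 1 < m) :
    ∫⁻ α in Ioi 0, ENNReal.ofReal (α ^ (k - 1) * (Gamma (1 + α) / Gamma (α + m))) =
      ∫⁻ t in Ioo 0 1,
        ENNReal.ofReal (Gamma k / Gamma (m - 1) * ((1 - t) ^ (m - 2) * (1 / -log t) ^ k)) := by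
  have hΓ : 0 ≤ (Gamma (m - 1))⁻¹ := (inv_pos.2 (Gamma_pos_of_pos (by linarith))).le
  calc _ = ∫⁻ α in Ioi 0, ∫⁻ t in Ioo 0 1,
          ENNReal.ofReal (α ^ (k - 1) * ((Gamma (m - 1))⁻¹ * (t ^ α * (1 - t) ^ (m - 2)))) := by
        refine setLIntegral_congr_fun measurableSet_Ioi fun α (hα : 0 < α) => ?_
        simp_rw [ENNReal.ofReal_mul (rpow_nonneg hα.le _)]
        rw [lintegral_const_mul' _ _ ENNReal.ofReal_ne_top,
          ofReal_Gamma_div_Gamma_eq_lintegral (by linarith) hm]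
    _ = ∫⁻ t in Ioo 0 1, ∫⁻ α in Ioi 0,
          ENNReal.ofReal (α ^ (k - 1) * ((Gamma (m - 1))⁻¹ * (t ^ α * (1 - t) ^ (m - 2)))) :=
        lintegral_lintegral_swap (by fun_prop)
    _ = _ := by
        refine setLIntegral_congr_fun measurableSet_Ioo fun t ⟨ht₀, ht₁⟩ => ?_
        have hlog : 0 < -log t := neg_pos.2 (log_neg ht₀ ht₁)
        have hc : 0 ≤ (Gamma (m - 1))⁻¹ * (1 - t) ^ (m - 2) :=
          mul_nonneg hΓ (rpow_nonneg (by linarith) _)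
        calc _ = ∫⁻ α in Ioi 0, ENNReal.ofReal ((Gamma (m - 1))⁻¹ * (1 - t) ^ (m - 2)) *
              ENNReal.ofReal (α ^ (k - 1) * exp (-(-log t * α))) := by
              refine setLIntegral_congr_fun measurableSet_Ioi fun α _ => ?_
              rw [← ENNReal.ofReal_mul hc, rpow_def_of_pos ht₀, neg_mul, neg_neg]
              congr 1
              ring
          _ = _ := by
              rw [lintegral_const_mul' _ _ ENNReal.ofReal_ne_top,
                lintegral_rpow_mul_exp_neg_mul_Ioi hk hlog, ← ENNReal.ofReal_mul hc]
              congr 1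
              ring

lemma div_one_sub_le_one_div_neg_log {t : ℝ} (ht₀ : 0 < t) (ht₁ : t < 1) :
    t / (1 - t) ≤ 1 / -log t := by
  have h := one_sub_inv_le_log_of_pos ht₀
  rw [div_le_div_iff₀ (by linarith) (neg_pos.2 (log_neg ht₀ ht₁)), one_mul]
  have : t * t⁻¹ = 1 := mul_inv_cancel₀ ht₀.ne'
  nlinarith

lemma rpow_mul_one_sub_rpow_le_mul_one_div_neg_log_rpow {t k : ℝ} (m : ℝ) (ht₀ : 0 < t)
    (ht₁ : t < 1) (hk : 0 ≤ k) :
    t ^ k * (1 - t) ^ (m - 2 - k) ≤ (1 - t) ^ (m - 2) * (1 / -log t) ^ k := by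
  have h1t : 0 < 1 - t := by linarith
  calc t ^ k * (1 - t) ^ (m - 2 - k) = (1 - t) ^ (m - 2) * (t / (1 - t)) ^ k := by
        rw [div_rpow ht₀.le h1t.le, rpow_sub h1t (m - 2) k]
        field_simp
    _ ≤ _ := by
        gcongr (1 - t) ^ (m - 2) * ?_ ^ k
        exact div_one_sub_le_one_div_neg_log ht₀ ht₁

lemma mul_one_div_neg_log_rpow_le_one_sub_rpow {t k : ℝ} (m : ℝ) (ht₀ : 0 < t) (ht₁ : t < 1)
    (hk : 0 ≤ k) :
    (1 - t) ^ (m - 2) * (1 / -log t) ^ k ≤ (1 - t) ^ (m - 2 - k) := by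
  have h1t : 0 < 1 - t := by linarith
  calc (1 - t) ^ (m - 2) * (1 / -log t) ^ k ≤ (1 - t) ^ (m - 2) * (1 / (1 - t)) ^ k := by
        have := neg_pos.2 (log_neg ht₀ ht₁)
        gcongr
        linarith [log_le_sub_one_of_pos ht₀]
    _ = (1 - t) ^ (m - 2 - k) := by
        rw [div_rpow zero_le_one h1t.le, one_rpow, rpow_sub h1t (m - 2) k]
        field_simp

section

variable {k m : ℝ} (c : ℝ)

lemma ofReal_mul_beta_le_lintegral (hc : 0 ≤ c) (hk : 0 < k) (hkm : k + 1 < m) :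
    ENNReal.ofReal (c * ProbabilityTheory.beta (k + 1) (m - k - 1)) ≤
      ∫⁻ t in Ioo 0 1, ENNReal.ofReal (c * ((1 - t) ^ (m - 2) * (1 / -log t) ^ k)) := by
  have h := lintegral_rpow_mul_one_sub_rpow_eq_beta (a := k + 1) (b := m - k - 1) (by linarith)
    (by linarith)
  rw [add_sub_cancel_right, show m - k - 1 - 1 = m - 2 - k by ring] at h
  rw [ENNReal.ofReal_mul hc, ← h, ← lintegral_const_mul' _ _ ENNReal.ofReal_ne_top]
  refine setLIntegral_mono' measurableSet_Ioo fun t ⟨ht₀, ht₁⟩ => ?_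
  rw [← ENNReal.ofReal_mul hc]
  exact ENNReal.ofReal_le_ofReal (mul_le_mul_of_nonneg_left
    (rpow_mul_one_sub_rpow_le_mul_one_div_neg_log_rpow m ht₀ ht₁ hk.le) hc)

lemma lintegral_le_ofReal_mul_beta (hc : 0 ≤ c) (hk : 0 ≤ k) (hkm : k + 1 < m) :
    ∫⁻ t in Ioo 0 1, ENNReal.ofReal (c * ((1 - t) ^ (m - 2) * (1 / -log t) ^ k)) ≤
      ENNReal.ofReal (c * ProbabilityTheory.beta 1 (m - k - 1)) := by
  have h := lintegral_rpow_mul_one_sub_rpow_eq_beta (a := 1) (b := m - k - 1) one_pos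
    (by linarith)
  simp only [sub_self, rpow_zero, one_mul, show m - k - 1 - 1 = m - 2 - k by ring] at h
  rw [ENNReal.ofReal_mul hc, ← h, ← lintegral_const_mul' _ _ ENNReal.ofReal_ne_top]
  refine setLIntegral_mono' measurableSet_Ioo fun t ⟨ht₀, ht₁⟩ => ?_
  rw [← ENNReal.ofReal_mul hc]
  exact ENNReal.ofReal_le_ofReal (mul_le_mul_of_nonneg_left
    (mul_one_div_neg_log_rpow_le_one_sub_rpow m ht₀ ht₁ hk) hc)

end

lemma continuousOn_rpow_mul_Gamma_div_Gamma (k : ℝ) {m : ℝ} (hm : 0 < m) :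
    ContinuousOn (fun α => α ^ (k - 1) * (Gamma (1 + α) / Gamma (α + m))) (Ioi 0) := by
  intro α (hα : 0 < α)
  have hΓ {s : ℝ} (hs : 0 < s) : ContinuousAt Gamma s :=
    (differentiableAt_Gamma fun n => ((neg_nonpos.2 n.cast_nonneg).trans_lt hs).ne').continuousAt
  refine ContinuousAt.continuousWithinAt ?_
  exact (continuousAt_id.rpow_const (Or.inl hα.ne')).mul
    (((hΓ (by linarith)).comp (f := (1 + ·)) (by fun_prop)).div
      ((hΓ (by linarith)).comp (f := (· + m)) (by fun_prop)) (Gamma_pos_of_pos (by linarith)).ne')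

theorem Gamma_mul_Gamma_mul_Gamma_div_le_integral {k m : ℝ} (hk : 0 < k) (hkm : k + 1 < m) :
    Gamma k * Gamma (k + 1) * Gamma (m - k - 1) / (Gamma (m - 1) * Gamma m) ≤
      ∫ α in Ioi 0, α ^ (k - 1) * (Gamma (1 + α) / Gamma (α + m)) := by
  have hc : 0 ≤ Gamma k / Gamma (m - 1) :=
    div_nonneg (Gamma_pos_of_pos hk).le (Gamma_pos_of_pos (by linarith)).le
  have hnonneg : 0 ≤ᵐ[volume.restrict (Ioi 0)]
      fun α : ℝ => α ^ (k - 1) * (Gamma (1 + α) / Gamma (α + m)) := by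
    filter_upwards [ae_restrict_mem measurableSet_Ioi] with α (hα : 0 < α)
    have := Gamma_pos_of_pos (show 0 < 1 + α by linarith)
    have := Gamma_pos_of_pos (show 0 < α + m by linarith)
    positivity
  have hlint := lintegral_rpow_mul_Gamma_div_Gamma_eq hk (by linarith : 1 < m)
  have hfin := (lintegral_le_ofReal_mul_beta _ hc hk.le hkm).trans_lt ENNReal.ofReal_lt_top
  rw [integral_eq_lintegral_of_nonneg_ae hnonneg
      ((continuousOn_rpow_mul_Gamma_div_Gamma k (by linarith)).aestronglyMeasurable
        measurableSet_Ioi),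
    ← ENNReal.ofReal_le_iff_le_toReal (hlint ▸ hfin.ne), hlint]
  convert ofReal_mul_beta_le_lintegral _ hc hk hkm using 2
  rw [ProbabilityTheory.beta, show k + 1 + (m - k - 1) = m by ring]
  ring

/-- **Lower bound for the marginal-likelihood integral.** For integers `K ≥ 1`, `N ≥ K + 2`:
`∫₀^∞ α^{K−1} Γ(1+α)/Γ(α+N) dα ≥ Γ(K) Γ(K+1) Γ(N−K−1) / (Γ(N−1) Γ(N))`. -/
theorem gamma_ratio_integral_lower_bound (K N : ℕ) (hK : 1 ≤ K) (hN : K + 2 ≤ N) :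
    Real.Gamma K * Real.Gamma (K + 1) * Real.Gamma ((N : ℝ) - K - 1)
        / (Real.Gamma ((N : ℝ) - 1) * Real.Gamma N)
      ≤ ∫ α in Set.Ioi (0 : ℝ), α ^ (K - 1) * (Real.Gamma (1 + α) / Real.Gamma (α + N)) := by
  have hk : (0 : ℝ) < K := by exact_mod_cast hK
  have hkm : (K : ℝ) + 1 < N := by exact_mod_cast (by omega : K + 1 < N)
  refine (Gamma_mul_Gamma_mul_Gamma_div_le_integral hk hkm).trans_eq
    (setIntegral_congr_fun measurableSet_Ioi fun α _ => ?_)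
  rw [← rpow_natCast, Nat.cast_sub hK, Nat.cast_one]
end

section
/- For all integers K ≥ 1 and N ≥ K + 2: ∫₀¹ (1−t)^{N−2} (log(1/t))^{−K} dt ≥ B(K+1, N−K−1) = Γ(K+1) Γ(N−K−1) / Γ(N). -/
open MeasureTheory

lemma gamma_beta_aux (a b : ℕ) :
    Real.Gamma (a + 1) * Real.Gamma (b + 1)
      = Real.Gamma (a + b + 2) * ∫ t in (0:ℝ)..1, t ^ a * (1 - t) ^ b := by
  have hs : 0 < ((a : ℂ) + 1).re := by
    simp only [Complex.add_re, Complex.natCast_re, Complex.one_re]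
    positivity
  have ht : 0 < ((b : ℂ) + 1).re := by
    simp only [Complex.add_re, Complex.natCast_re, Complex.one_re]
    positivity
  have h := Complex.Gamma_mul_Gamma_eq_betaIntegral hs ht
  have hbeta : Complex.betaIntegral ((a : ℂ) + 1) ((b : ℂ) + 1)
      = ((∫ t in (0:ℝ)..1, t ^ a * (1 - t) ^ b : ℝ) : ℂ) := by
    rw [Complex.betaIntegral, ← intervalIntegral.integral_ofReal]
    refine intervalIntegral.integral_congr fun x _ => ?_
    rw [add_sub_cancel_right, add_sub_cancel_right, Complex.cpow_natCast, Complex.cpow_natCast]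
    push_cast
    ring
  rw [hbeta] at h
  have e3 : (a : ℂ) + 1 + ((b : ℂ) + 1) = ((a + b + 2 : ℝ) : ℂ) := by push_cast; ring
  have e1 : (a : ℂ) + 1 = ((a + 1 : ℝ) : ℂ) := by push_cast; ring
  have e2 : (b : ℂ) + 1 = ((b + 1 : ℝ) : ℂ) := by push_cast; ring
  rw [e3, e1, e2, Complex.Gamma_ofReal, Complex.Gamma_ofReal, Complex.Gamma_ofReal,
    ← Complex.ofReal_mul, ← Complex.ofReal_mul, Complex.ofReal_inj] at h
  exact h

/-- **A log-power integral lower bound.** For integers `K ≥ 1`, `N ≥ K + 2`: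
`∫₀¹ (1−t)^{N−2} (log(1/t))^{−K} dt ≥ B(K+1, N−K−1) = Γ(K+1) Γ(N−K−1) / Γ(N)`,
resting on the bound `(log(1/t))⁻¹ ≥ t/(1−t)` for `t ∈ (0,1)`. -/
theorem log_inv_pow_integral_lower_bound (K N : ℕ) (hK : 1 ≤ K) (hN : K + 2 ≤ N) :
    Real.Gamma (K + 1) * Real.Gamma ((N : ℝ) - K - 1) / Real.Gamma N
      ≤ ∫ t in Set.Ioo (0 : ℝ) 1, (1 - t) ^ (N - 2) * ((Real.log (1 / t)) ^ K)⁻¹ := by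
  obtain ⟨m, rfl⟩ : ∃ m, N = K + m + 2 := ⟨N - K - 2, by omega⟩
  have hb : ((K + m + 2 : ℕ) : ℝ) - K - 1 = (m : ℝ) + 1 := by push_cast; ring
  have hcN : ((K + m + 2 : ℕ) : ℝ) = (K : ℝ) + (m : ℝ) + 2 := by push_cast; ring
  have hΓpos : (0 : ℝ) < Real.Gamma ((K : ℝ) + (m : ℝ) + 2) :=
    Real.Gamma_pos_of_pos (by positivity)
  have hexp : K + m + 2 - 2 = K + m := by omega
  rw [hb, hcN, hexp, gamma_beta_aux K m,
    mul_div_cancel_left₀ _ (ne_of_gt hΓpos)]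
  rw [intervalIntegral.integral_of_le zero_le_one, MeasureTheory.integral_Ioc_eq_integral_Ioo]
  refine setIntegral_mono_on ?_ ?_ measurableSet_Ioo ?_
  · exact ((continuous_pow K).mul ((continuous_const.sub continuous_id).pow
      m)).continuousOn.integrableOn_compact isCompact_Icc |>.mono_set Set.Ioo_subset_Icc_self
  · refine Measure.integrableOn_of_bounded (M := 1)
      (measure_Ioo_lt_top).ne ?_ ?_
    · apply Measurable.aestronglyMeasurable
      exact ((measurable_const.sub measurable_id).pow_const _).mul
        (((Real.measurable_log.comp (measurable_const.div measurable_id)).pow_const _).inv)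
    · filter_upwards [ae_restrict_mem measurableSet_Ioo] with t ht
      obtain ⟨ht0, ht1⟩ := ht
      have h1t : (0 : ℝ) < 1 - t := by linarith
      have hL : 1 - t ≤ Real.log (1 / t) := by
        rw [one_div, Real.log_inv]
        have := Real.log_le_sub_one_of_pos ht0
        linarith
      have hLpos : 0 < Real.log (1 / t) := lt_of_lt_of_le h1t hL
      have hpowle : (1 - t) ^ K ≤ Real.log (1 / t) ^ K :=
        pow_le_pow_left₀ (le_of_lt h1t) hL K
      have hfnn : 0 ≤ (1 - t) ^ (K + m) * ((Real.log (1 / t)) ^ K)⁻¹ := by positivity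
      rw [Real.norm_eq_abs, abs_of_nonneg hfnn]
      have hinv : ((Real.log (1 / t)) ^ K)⁻¹ ≤ ((1 - t) ^ K)⁻¹ :=
        inv_anti₀ (by positivity) hpowle
      calc (1 - t) ^ (K + m) * ((Real.log (1 / t)) ^ K)⁻¹
          ≤ (1 - t) ^ (K + m) * ((1 - t) ^ K)⁻¹ := by
            exact mul_le_mul_of_nonneg_left hinv (by positivity)
        _ = (1 - t) ^ m := by
            rw [pow_add]
            field_simp
        _ ≤ 1 := by
            apply pow_le_one₀ (le_of_lt h1t)
            linarith
  · intro t ht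
    obtain ⟨ht0, ht1⟩ := ht
    have h1t : (0 : ℝ) < 1 - t := by linarith
    have hL : 1 - t ≤ Real.log (1 / t) := by
      rw [one_div, Real.log_inv]
      have := Real.log_le_sub_one_of_pos ht0
      linarith
    have hLpos : 0 < Real.log (1 / t) := lt_of_lt_of_le h1t hL
    have hLle : Real.log (1 / t) ≤ (1 - t) / t := by
      have := Real.log_le_sub_one_of_pos (x := 1 / t) (by positivity)
      have h : (1 : ℝ) / t - 1 = (1 - t) / t := by field_simp
      linarith [h ▸ this]
    have hpow : Real.log (1 / t) ^ K ≤ ((1 - t) / t) ^ K :=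
      pow_le_pow_left₀ (le_of_lt hLpos) hLle K
    have hinv : (((1 - t) / t) ^ K)⁻¹ ≤ ((Real.log (1 / t)) ^ K)⁻¹ :=
      inv_anti₀ (by positivity) hpow
    calc t ^ K * (1 - t) ^ m
        = (1 - t) ^ (K + m) * (((1 - t) / t) ^ K)⁻¹ := by
          rw [pow_add, div_pow, inv_div]
          field_simp
      _ ≤ (1 - t) ^ (K + m) * ((Real.log (1 / t)) ^ K)⁻¹ :=
          mul_le_mul_of_nonneg_left hinv (by positivity)
end
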